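/- arXiv:2109.10344 — 3 statements merged into one kernel-verified Lean document; each statement's English description precedes it below -/
import Mathlib

section
/- For every nonnegative integer n, pod_3(n) satisfies ∑_{n≥0} pod_3(n) q^n ≡ ψ(-q)^2 (mod 3) as power series with integer coefficients. -/
/-- `pod ℓ n` is the number of `ℓ`-regular partitions of `n` (no part divisible by `ℓ`)
with distinct odd parts (even parts unrestricted). -/
noncomputable def pod (ℓ n : ℕ) : ℕ :=
  Nat.card {P : n.Partition // (∀ i ∈ P.parts, ¬ ℓ ∣ i) ∧ ∀ i, Odd i → P.parts.count i ≤ 1}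

open Classical in
/-- The formal power series `ψ(-q^ℓ) = ∑_{m ≥ 0} (-1)^{T_m} q^{ℓ·T_m}`, `T_m = m(m+1)/2`. -/
noncomputable def psiNeg (ℓ : ℕ) : PowerSeries ℤ :=
  PowerSeries.mk fun n => if ∃ m, ℓ * (m * (m + 1) / 2) = n then (-1 : ℤ) ^ (n / ℓ) else 0

namespace PodAux
open PowerSeries Finset

/-- triangular numbers -/
def T (m : ℕ) : ℕ := m * (m + 1) / 2

lemma two_T (m : ℕ) : 2 * T m = m * (m + 1) := by
  have : 2 ∣ m * (m + 1) := (Nat.even_mul_succ_self m).two_dvd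
  unfold T; omega

lemma T_succ (m : ℕ) : T (m + 1) = T m + (m + 1) := by
  have h1 := two_T m; have h2 := two_T (m + 1); nlinarith

variable {R : Type*} [CommRing R]

/-- Gaussian binomial–like coefficients, defined by a Pascal rule. -/
def gb (Q : R) : ℕ → ℕ → R
  | _, 0 => 1
  | 0, _ + 1 => 0
  | M + 1, m + 1 => gb Q M (m + 1) + Q ^ (M - m) * gb Q M m

@[simp] lemma gb_zero_right (Q : R) (M : ℕ) : gb Q M 0 = 1 := by cases M <;> rfl

lemma gb_eq_zero (Q : R) : ∀ {M m : ℕ}, M < m → gb Q M m = 0 := by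
  intro M
  induction M with
  | zero => intro m h; match m, h with | (m+1), _ => rfl
  | succ M ih =>
    intro m h
    match m, h with
    | (m+1), h =>
      show gb Q M (m+1) + Q ^ (M - m) * gb Q M m = 0
      rw [ih (by omega), ih (by omega), mul_zero, add_zero]

/-- Homogeneous q-binomial theorem. -/
lemma qbinom (Q y z : R) (M : ℕ) :
    ∏ k ∈ range M, (z + y * Q ^ (k + 1)) =
      ∑ m ∈ range (M + 1), gb Q M m * Q ^ (T m) * y ^ m * z ^ (M - m) := by
  induction M with
  | zero => simp [T]
  | succ M ih =>
    rw [prod_range_succ, ih, sum_mul]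
    have expand : ∀ m ∈ range (M + 1),
        gb Q M m * Q ^ T m * y ^ m * z ^ (M - m) * (z + y * Q ^ (M + 1)) =
          gb Q M m * Q ^ T m * y ^ m * z ^ (M + 1 - m) +
          gb Q M m * (Q ^ (T m + (M + 1)) * (y ^ (m + 1) * z ^ (M - m))) := by
      intro m hm
      rw [mem_range] at hm
      have hz : z ^ (M - m) * z = z ^ (M + 1 - m) := by
        rw [← pow_succ]; congr 1; omega
      rw [mul_add, mul_assoc _ _ z, hz, pow_add, pow_succ]
      ring
    rw [sum_congr rfl expand, sum_add_distrib]
    have hfirst : ∑ m ∈ range (M + 1), gb Q M m * Q ^ T m * y ^ m * z ^ (M + 1 - m) =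
        (∑ m ∈ range (M+1), gb Q M (m+1) * Q ^ T (m+1) * y ^ (m+1) * z ^ (M - m))
          + gb Q M 0 * Q ^ T 0 * y ^ 0 * z ^ (M+1) := by
      rw [sum_range_succ' (fun m => gb Q M m * Q ^ T m * y ^ m * z ^ (M + 1 - m)) M]
      congr 1
      rw [sum_range_succ, gb_eq_zero Q (by omega)]
      simp only [zero_mul, add_zero]
      apply sum_congr rfl
      intro m hm; rw [mem_range] at hm
      congr 2
      omega
    rw [hfirst]
    have htarget : ∑ m ∈ range (M + 2), gb Q (M+1) m * Q ^ T m * y ^ m * z ^ (M + 1 - m) =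
        (∑ m ∈ range (M+1), gb Q (M+1) (m+1) * Q ^ T (m+1) * y ^ (m+1) * z ^ (M - m))
          + gb Q (M+1) 0 * Q ^ T 0 * y ^ 0 * z ^ (M+1) := by
      rw [sum_range_succ' (fun m => gb Q (M+1) m * Q ^ T m * y ^ m * z ^ (M + 1 - m)) (M+1)]
      congr 1
      apply sum_congr rfl
      intro m hm; rw [mem_range] at hm
      congr 2
      omega
    rw [htarget, add_right_comm, ← sum_add_distrib]
    congr 1
    · apply sum_congr rfl
      intro m hm; rw [mem_range] at hm
      have he : T m + (M + 1) = T (m+1) + (M - m) := by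
        rw [T_succ]; omega
      show _ = (gb Q M (m + 1) + Q ^ (M - m) * gb Q M m) * Q ^ T (m+1) * y ^ (m+1) * z ^ (M - m)
      rw [he, pow_add]
      ring
    · simp

/-- closed form: gb(M,m) * (Q;Q)_m = (1-Q^{M-m+1})⋯(1-Q^M). -/
lemma gb_mul (Q : R) : ∀ {M m : ℕ}, m ≤ M →
    gb Q M m * ∏ k ∈ range m, (1 - Q ^ (k + 1)) =
      ∏ k ∈ range m, (1 - Q ^ (M - m + k + 1)) := by
  intro M
  induction M with
  | zero => intro m h; interval_cases m; simp
  | succ M ih =>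
    intro m h
    match m with
    | 0 => simp
    | (m+1) =>
      show (gb Q M (m+1) + Q ^ (M - m) * gb Q M m) * _ = _
      rcases Nat.lt_or_ge M (m+1) with hc | hc
      · -- m = M
        have hm : m = M := by omega
        rw [gb_eq_zero Q (by omega), zero_add, hm]
        have h0 : M - M = 0 := by omega
        rw [h0, pow_zero, one_mul, prod_range_succ, ← mul_assoc, ih (le_refl M)]
        have h2 : M + 1 - (M + 1) = 0 := by omega
        rw [h2, prod_range_succ]
        congr 1
        · apply prod_congr rfl; intro k hk; rw [mem_range] at hk; congr 2; omega
        · congr 2; omega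
      · -- m + 1 ≤ M
        rw [add_mul, ih (by omega : m + 1 ≤ M)]
        have h2 : Q ^ (M - m) * gb Q M m * ∏ k ∈ range (m+1), (1 - Q ^ (k+1))
            = Q ^ (M-m) * (1 - Q ^ (m+1)) * (gb Q M m * ∏ k ∈ range m, (1 - Q ^ (k+1))) := by
          rw [prod_range_succ]; ring
        rw [h2, ih (by omega : m ≤ M)]
        have e1 : ∏ k ∈ range (m+1), (1 - Q ^ (M - (m+1) + k + 1)) =
            (1 - Q ^ (M - m)) * ∏ k ∈ range m, (1 - Q ^ (M - m + k + 1)) := by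
          rw [prod_range_succ' (fun k => 1 - Q ^ (M - (m+1) + k + 1)) m]
          rw [mul_comm]
          congr 1
          · congr 2; omega
          · apply prod_congr rfl; intro k hk; rw [mem_range] at hk; congr 2; omega
        have e2 : ∏ k ∈ range (m+1), (1 - Q ^ (M + 1 - (m+1) + k + 1)) =
            (∏ k ∈ range m, (1 - Q ^ (M - m + k + 1))) * (1 - Q ^ (M + 1)) := by
          rw [prod_range_succ]
          congr 1
          · apply prod_congr rfl; intro k hk; rw [mem_range] at hk; congr 2; omega
          · congr 2; omega
        rw [e1, e2]
        have e4 : Q ^ (M - m) * Q ^ (m+1) = Q ^ (M+1) := by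
          rw [← pow_add]; congr 1; omega
        linear_combination (-(∏ k ∈ range m, (1 - Q ^ (M - m + k + 1)))) * e4


open PowerSeries Finset
variable {R : Type*} [CommRing R]

/-- coefficients agree up to degree `n`. -/
def EqN (n : ℕ) (f g : PowerSeries R) : Prop := ∀ m ≤ n, coeff (R := R) m f = coeff (R := R) m g

lemma EqN.refl {n : ℕ} (f : PowerSeries R) : EqN n f f := fun _ _ => rfl

lemma EqN.symm {n : ℕ} {f g : PowerSeries R} (h : EqN n f g) : EqN n g f :=
  fun m hm => (h m hm).symm

lemma EqN.trans {n : ℕ} {f g h : PowerSeries R} (h1 : EqN n f g) (h2 : EqN n g h) : EqN n f h :=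
  fun m hm => (h1 m hm).trans (h2 m hm)

lemma EqN.add {n : ℕ} {f g f' g' : PowerSeries R} (h : EqN n f g) (h' : EqN n f' g') :
    EqN n (f + f') (g + g') := fun m hm => by
  simp only [map_add, h m hm, h' m hm]

lemma EqN.mul {n : ℕ} {f g f' g' : PowerSeries R} (h : EqN n f g) (h' : EqN n f' g') :
    EqN n (f * f') (g * g') := by
  intro m hm
  rw [coeff_mul, coeff_mul]
  apply Finset.sum_congr rfl
  rintro ⟨i, j⟩ hij
  rw [HasAntidiagonal.mem_antidiagonal] at hij
  rw [h i (by omega), h' j (by omega)]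

lemma EqN.sum {n : ℕ} {ι : Type*} (s : Finset ι) (f g : ι → PowerSeries R)
    (h : ∀ i ∈ s, EqN n (f i) (g i)) : EqN n (∑ i ∈ s, f i) (∑ i ∈ s, g i) := fun m hm => by
  rw [map_sum, map_sum]
  exact Finset.sum_congr rfl fun i hi => h i hi m hm

lemma EqN.prod {n : ℕ} {ι : Type*} (s : Finset ι) (f g : ι → PowerSeries R)
    (h : ∀ i ∈ s, EqN n (f i) (g i)) : EqN n (∏ i ∈ s, f i) (∏ i ∈ s, g i) := by
  classical
  induction s using Finset.induction_on with
  | empty => simp [EqN.refl]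
  | insert _ _ hi ih =>
    rw [Finset.prod_insert hi, Finset.prod_insert hi]
    exact (h _ (mem_insert_self _ _)).mul (ih fun i his => h i (mem_insert_of_mem his))

lemma EqN_one_sub_pow {n j : ℕ} (h : n < j) : EqN n ((1 : PowerSeries R) - X ^ j) 1 := by
  intro m hm
  simp only [map_sub, coeff_X_pow]
  rw [if_neg (by omega)]
  ring

lemma EqN_zero_of_X_dvd {n j : ℕ} (h : n < j) (f : PowerSeries R) :
    EqN n (X ^ j * f) 0 := by
  intro m hm
  rw [map_zero, coeff_X_pow_mul', if_neg (by omega)]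

/-- cancellation by a series with unit constant coefficient 1 -/
lemma EqN.cancel {n : ℕ} {f g C : PowerSeries R} (hC : constantCoeff (R := R) C = 1)
    (h : EqN n (f * C) (g * C)) : EqN n f g := by
  intro m hm
  induction m using Nat.strong_induction_on with
  | _ m ih =>
    have hm' := h m hm
    rw [coeff_mul, coeff_mul, Finset.Nat.sum_antidiagonal_eq_sum_range_succ_mk,
      Finset.Nat.sum_antidiagonal_eq_sum_range_succ_mk, Finset.sum_range_succ,
      Finset.sum_range_succ] at hm'
    have heq : ∑ i ∈ range m, coeff (R := R) i f * coeff (R := R) (m - i) C =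
        ∑ i ∈ range m, coeff (R := R) i g * coeff (R := R) (m - i) C := by
      apply Finset.sum_congr rfl
      intro i hi
      rw [mem_range] at hi
      rw [ih i hi (by omega)]
    rw [heq] at hm'
    have h2 := add_left_cancel hm'
    simp only [Nat.sub_self, coeff_zero_eq_constantCoeff, hC, mul_one] at h2
    exact h2


/-- bilateral exponent: `e2 N (N+t) = t(2t-1)`, `e2 N (N-u) = u(2u+1)`. -/
def e2 (N m : ℕ) : ℕ := (m - N) * (2 * (m - N) - 1) + (N - m) * (2 * (N - m) + 1)

lemma e2_add (N t : ℕ) : e2 N (N + t) = t * (2 * t - 1) := by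
  unfold e2
  have h1 : N + t - N = t := by omega
  have h2 : N - (N + t) = 0 := by omega
  rw [h1, h2]; ring

lemma e2_sub {N u : ℕ} (h : u ≤ N) : e2 N (N - u) = u * (2 * u + 1) := by
  unfold e2
  have h1 : N - u - N = 0 := by omega
  have h2 : N - (N - u) = u := by omega
  rw [h1, h2]; ring

lemma e2_spec (N m : ℕ) :
    (∃ t, m = N + t ∧ e2 N m = t * (2 * t - 1)) ∨
      (∃ u, 1 ≤ u ∧ u ≤ N ∧ m = N - u ∧ e2 N m = u * (2 * u + 1)) := by
  rcases le_or_gt N m with h | h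
  · refine Or.inl ⟨m - N, by omega, ?_⟩
    unfold e2
    have h2 : N - m = 0 := by omega
    rw [h2]
    simp
  · refine Or.inr ⟨N - m, by omega, by omega, by omega, ?_⟩
    rw [show m = N - (N - m) by omega, e2_sub (by omega)]
    congr 1 <;> omega

lemma mono1 {t t' : ℕ} (h : t < t') : t * (2 * t - 1) < t' * (2 * t' - 1) := by
  obtain ⟨a, rfl⟩ : ∃ a, t' = a + 1 := ⟨t' - 1, by omega⟩
  have h1 : 2 * (a + 1) - 1 = 2 * a + 1 := by omega
  rw [h1]
  rcases Nat.eq_zero_or_pos t with rfl | ht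
  · simp
  · obtain ⟨b, rfl⟩ : ∃ b, t = b + 1 := ⟨t - 1, by omega⟩
    have h2 : 2 * (b + 1) - 1 = 2 * b + 1 := by omega
    rw [h2]
    nlinarith

lemma mono2 {u u' : ℕ} (h : u < u') : u * (2 * u + 1) < u' * (2 * u' + 1) := by nlinarith

lemma cross {t u : ℕ} (ht : 1 ≤ t) (hu : 1 ≤ u) : t * (2 * t - 1) ≠ u * (2 * u + 1) := by
  obtain ⟨b, rfl⟩ : ∃ b, t = b + 1 := ⟨t - 1, by omega⟩
  have h2 : 2 * (b + 1) - 1 = 2 * b + 1 := by omega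
  rw [h2]
  intro h
  rcases le_or_gt (b + 1) u with hc | hc
  · nlinarith
  · nlinarith

/-- injectivity of `e2 N ·` -/
lemma e2_inj {N m m' : ℕ} (h : e2 N m = e2 N m') : m = m' := by
  rcases e2_spec N m with ⟨t, rfl, he⟩ | ⟨u, hu1, hu2, hm, he⟩ <;>
    rcases e2_spec N m' with ⟨t', rfl, he'⟩ | ⟨u', hu1', hu2', hm', he'⟩
  · rw [he, he'] at h
    rcases Nat.lt_trichotomy t t' with hc | hc | hc
    · exact absurd h (Nat.ne_of_lt (mono1 hc))
    · omega
    · exact absurd h.symm (Nat.ne_of_lt (mono1 hc))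
  · rw [he, he'] at h
    rcases Nat.eq_zero_or_pos t with rfl | ht
    · simp at h; nlinarith
    · exact absurd h (cross ht hu1')
  · rw [he, he'] at h
    rcases Nat.eq_zero_or_pos t' with rfl | ht
    · simp at h; nlinarith
    · exact absurd h.symm (cross ht hu1)
  · rw [he, he'] at h
    have : u = u' := by
      rcases Nat.lt_trichotomy u u' with hc | hc | hc
      · exact absurd h (Nat.ne_of_lt (mono2 hc))
      · exact hc
      · exact absurd h.symm (Nat.ne_of_lt (mono2 hc))
    omega

/-- main exponent identity -/
lemma exponent_id {N m : ℕ} (h : m ≤ 2 * N) :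
    4 * T m + (4 * N + 3) * (2 * N - m) = (6 * N ^ 2 + 5 * N) + e2 N m := by
  rcases e2_spec N m with ⟨t, rfl, he⟩ | ⟨u, hu1, hu2, hm, he⟩
  · rw [he]
    obtain ⟨s, hs⟩ : ∃ s, N = t + s := ⟨N - t, by omega⟩
    have h2 : 2 * N - (N + t) = s := by omega
    rw [h2]
    have hT : (2 * T (N + t) : ℤ) = (N + t) * (N + t + 1) := by exact_mod_cast two_T (N + t)
    rcases Nat.eq_zero_or_pos t with rfl | ht
    · zify
      push_cast at hT
      subst hs
      push_cast at hT ⊢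
      linear_combination 2 * hT
    · obtain ⟨b, rfl⟩ : ∃ b, t = b + 1 := ⟨t - 1, by omega⟩
      have h3 : 2 * (b + 1) - 1 = 2 * b + 1 := by omega
      rw [h3]
      zify
      subst hs
      push_cast at hT ⊢
      linear_combination 2 * hT
  · rw [he]
    obtain ⟨p, hp⟩ : ∃ p, m = p := ⟨m, rfl⟩
    have hN : N = m + u := by omega
    have h2 : 2 * N - m = m + 2 * u := by omega
    rw [h2]
    have hT : (2 * T m : ℤ) = m * (m + 1) := by exact_mod_cast two_T m
    zify
    rw [hN]
    push_cast
    linear_combination 2 * hT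

lemma bound1 {s n : ℕ} (h : s * s ≤ n) : n < 4 * (n + 2 - s) := by
  have hs : s ≤ n + 1 := by nlinarith
  have hs2 : s ≤ n + 2 := by omega
  zify [hs2] at h ⊢
  nlinarith [sq_nonneg ((s : ℤ) - 2)]

/-- for kept terms, all the pochhammer factor exponents are > n -/
lemma kept_bounds {n m : ℕ} (hm : m ≤ 2 * (n + 1)) (he : e2 (n + 1) m ≤ n) :
    n < 4 * (2 * (n + 1) - m + 1) ∧ n < 4 * (m + 1) := by
  rcases e2_spec (n + 1) m with ⟨t, rfl, hee⟩ | ⟨u, hu1, hu2, hmm, hee⟩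
  · rw [hee] at he
    have h1 : t * t ≤ n := by
      rcases Nat.eq_zero_or_pos t with rfl | ht
      · simp
      · calc t * t ≤ t * (2 * t - 1) := Nat.mul_le_mul_left _ (by omega)
          _ ≤ n := he
    have := bound1 h1
    omega
  · rw [hee] at he
    have h1 : u * u ≤ n := by
      calc u * u ≤ u * (2 * u + 1) := Nat.mul_le_mul_left _ (by omega)
        _ ≤ n := he
    have := bound1 h1
    omega



lemma sum_arith (N : ℕ) : ∑ k ∈ range N, (4 * k + 4) = 2 * N ^ 2 + 2 * N := by
  induction N with
  | zero => simp
  | succ N ih =>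
    rw [sum_range_succ, ih]
    have : 2 * (N + 1) ^ 2 + 2 * (N + 1) = 2 * N ^ 2 + 2 * N + (4 * N + 4) := by ring
    omega

lemma neg_one_sq' (N : ℕ) : ((-1 : PowerSeries ℤ)) ^ N * (-1) ^ N = 1 := by
  rw [← pow_add]
  exact Even.neg_one_pow ⟨N, by ring⟩

/-- The specialized finite Jacobi-triple-product-style identity. -/
lemma step_exact (ℓ N : ℕ) :
    ∏ i ∈ range N, ((1 - (X : PowerSeries ℤ) ^ (ℓ * (4 * i + 1))) * (1 - X ^ (ℓ * (4 * i + 3)))) =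
      (-1) ^ N * ∑ m ∈ range (2 * N + 1),
        (-1) ^ m * gb ((X : PowerSeries ℤ) ^ (4 * ℓ)) (2 * N) m * X ^ (ℓ * e2 N m) := by
  have hq := qbinom ((X : PowerSeries ℤ) ^ (4 * ℓ)) (-1) (X ^ (ℓ * (4 * N + 3))) (2 * N)
  -- rewrite factors of q-binomial LHS
  have hfac : ∀ k, (X : PowerSeries ℤ) ^ (ℓ * (4 * N + 3)) + (-1) * ((X : PowerSeries ℤ) ^ (4 * ℓ)) ^ (k + 1) =
      X ^ (ℓ * (4 * N + 3)) - X ^ (ℓ * (4 * k + 4)) := by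
    intro k
    rw [← pow_mul]
    have h : 4 * ℓ * (k + 1) = ℓ * (4 * k + 4) := by ring
    rw [h]; ring
  rw [prod_congr rfl (fun k _ => hfac k)] at hq
  -- LHS factorization
  have hL : ∏ k ∈ range (2 * N), ((X : PowerSeries ℤ) ^ (ℓ * (4 * N + 3)) - X ^ (ℓ * (4 * k + 4))) =
      (-1) ^ N * X ^ (ℓ * (6 * N ^ 2 + 5 * N)) *
        ∏ i ∈ range N, ((1 - (X : PowerSeries ℤ) ^ (ℓ * (4 * i + 1))) * (1 - X ^ (ℓ * (4 * i + 3)))) := by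
    have h2N : 2 * N = N + N := by ring
    rw [h2N, prod_range_add]
    have hB : ∏ i ∈ range N, ((X : PowerSeries ℤ) ^ (ℓ * (4 * N + 3)) - X ^ (ℓ * (4 * (N + i) + 4))) =
        ∏ i ∈ range N, (X ^ (ℓ * (4 * N + 3)) * (1 - (X : PowerSeries ℤ) ^ (ℓ * (4 * i + 1)))) := by
      apply prod_congr rfl
      intro i _
      have h : ℓ * (4 * (N + i) + 4) = ℓ * (4 * N + 3) + ℓ * (4 * i + 1) := by ring
      rw [h, pow_add]
      ring
    have hA : ∏ k ∈ range N, ((X : PowerSeries ℤ) ^ (ℓ * (4 * N + 3)) - X ^ (ℓ * (4 * k + 4))) =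
        ∏ k ∈ range N, ((-1) * (X ^ (ℓ * (4 * k + 4)) *
          (1 - (X : PowerSeries ℤ) ^ (ℓ * (4 * (N - 1 - k) + 3))))) := by
      apply prod_congr rfl
      intro k hk
      rw [mem_range] at hk
      have h : ℓ * (4 * N + 3) = ℓ * (4 * k + 4) + ℓ * (4 * (N - 1 - k) + 3) := by
        have : 4 * N + 3 = 4 * k + 4 + (4 * (N - 1 - k) + 3) := by omega
        rw [this]; ring
      rw [h, pow_add]
      ring
    rw [hA, hB]
    rw [prod_mul_distrib, prod_mul_distrib, prod_mul_distrib, prod_const, prod_const,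
      prod_range_reflect (fun i => 1 - (X : PowerSeries ℤ) ^ (ℓ * (4 * i + 3))) N,
      prod_pow_eq_pow_sum, card_range]
    have hsum : (∑ i ∈ range N, ℓ * (4 * i + 4)) = ℓ * (2 * N ^ 2 + 2 * N) := by
      rw [← mul_sum, sum_arith]
    rw [hsum]
    have hx : (X : PowerSeries ℤ) ^ (ℓ * (2 * N ^ 2 + 2 * N)) * X ^ (ℓ * (4 * N + 3) * N) =
        X ^ (ℓ * (6 * N ^ 2 + 5 * N)) := by
      rw [← pow_add]; congr 1; ring
    rw [prod_mul_distrib, ← hx]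
    set a := (X : PowerSeries ℤ) ^ (ℓ * (2 * N ^ 2 + 2 * N)) with ha
    set b := (X : PowerSeries ℤ) ^ (ℓ * (4 * N + 3) * N) with hb
    set P1 := ∏ x ∈ range N, (1 - (X : PowerSeries ℤ) ^ (ℓ * (4 * x + 1))) with hP1
    set P3 := ∏ x ∈ range N, (1 - (X : PowerSeries ℤ) ^ (ℓ * (4 * x + 3))) with hP3
    ring
  rw [hL] at hq
  -- RHS rearrangement
  have hR : ∑ m ∈ range (2 * N + 1),
      gb ((X : PowerSeries ℤ) ^ (4 * ℓ)) (2 * N) m * ((X : PowerSeries ℤ) ^ (4 * ℓ)) ^ T m *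
        (-1) ^ m * ((X : PowerSeries ℤ) ^ (ℓ * (4 * N + 3))) ^ (2 * N - m) =
      X ^ (ℓ * (6 * N ^ 2 + 5 * N)) * ∑ m ∈ range (2 * N + 1),
        (-1) ^ m * gb ((X : PowerSeries ℤ) ^ (4 * ℓ)) (2 * N) m * X ^ (ℓ * e2 N m) := by
    rw [mul_sum]
    apply sum_congr rfl
    intro m hm
    rw [mem_range] at hm
    rw [← pow_mul, ← pow_mul]
    have hexp : 4 * ℓ * T m + ℓ * (4 * N + 3) * (2 * N - m) =
        ℓ * (6 * N ^ 2 + 5 * N) + ℓ * e2 N m := by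
      have h := exponent_id (N := N) (m := m) (by omega)
      calc 4 * ℓ * T m + ℓ * (4 * N + 3) * (2 * N - m)
          = ℓ * (4 * T m + (4 * N + 3) * (2 * N - m)) := by ring
        _ = ℓ * (6 * N ^ 2 + 5 * N + e2 N m) := by rw [h]
        _ = ℓ * (6 * N ^ 2 + 5 * N) + ℓ * e2 N m := by ring
    calc gb ((X:PowerSeries ℤ) ^ (4*ℓ)) (2*N) m * X ^ (4 * ℓ * T m) * (-1) ^ m * X ^ (ℓ * (4*N+3) * (2*N - m))
        = (X ^ (4 * ℓ * T m) * X ^ (ℓ * (4*N+3) * (2*N - m))) *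
            ((-1) ^ m * gb ((X:PowerSeries ℤ) ^ (4*ℓ)) (2*N) m) := by ring
      _ = X ^ (ℓ * (6 * N ^ 2 + 5 * N) + ℓ * e2 N m) *
            ((-1) ^ m * gb ((X:PowerSeries ℤ) ^ (4*ℓ)) (2*N) m) := by rw [← pow_add, hexp]
      _ = _ := by rw [pow_add]; ring
  rw [hR] at hq
  -- cancel X^c
  have hc : (X : PowerSeries ℤ) ^ (ℓ * (6 * N ^ 2 + 5 * N)) ≠ 0 := pow_ne_zero _ X_ne_zero
  have hq2 : (X : PowerSeries ℤ) ^ (ℓ * (6 * N ^ 2 + 5 * N)) *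
      ((-1) ^ N * ∏ i ∈ range N, ((1 - (X : PowerSeries ℤ) ^ (ℓ * (4 * i + 1))) * (1 - X ^ (ℓ * (4 * i + 3))))) =
      (X : PowerSeries ℤ) ^ (ℓ * (6 * N ^ 2 + 5 * N)) * ∑ m ∈ range (2 * N + 1),
        (-1) ^ m * gb ((X : PowerSeries ℤ) ^ (4 * ℓ)) (2 * N) m * X ^ (ℓ * e2 N m) := by
    rw [← hq]; ring
  have hq3 := mul_left_cancel₀ hc hq2
  calc ∏ i ∈ range N, ((1 - (X : PowerSeries ℤ) ^ (ℓ * (4 * i + 1))) * (1 - X ^ (ℓ * (4 * i + 3))))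
      = ((-1) ^ N * (-1) ^ N) * ∏ i ∈ range N, ((1 - (X : PowerSeries ℤ) ^ (ℓ * (4 * i + 1))) * (1 - X ^ (ℓ * (4 * i + 3)))) := by
        rw [neg_one_sq', one_mul]
    _ = (-1) ^ N * ((-1) ^ N * ∏ i ∈ range N, ((1 - (X : PowerSeries ℤ) ^ (ℓ * (4 * i + 1))) * (1 - X ^ (ℓ * (4 * i + 3))))) := by ring
    _ = _ := by rw [hq3]


lemma EqN_prod_one {R : Type*} [CommRing R] {n : ℕ} {ι : Type*} (s : Finset ι)
    (f : ι → PowerSeries R) (h : ∀ i ∈ s, EqN n (f i) 1) : EqN n (∏ i ∈ s, f i) 1 := by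
  have := EqN.prod s f (fun _ => 1) h
  simpa using this

lemma T_even (u : ℕ) : T (2 * u) = u * (2 * u + 1) := by
  have h := two_T (2 * u)
  have h2 : 2 * u * (2 * u + 1) = 2 * (u * (2 * u + 1)) := by ring
  omega

lemma T_odd (t : ℕ) : T (2 * t + 1) = (t + 1) * (2 * t + 1) := by
  have h := two_T (2 * t + 1)
  have h2 : (2 * t + 1) * (2 * t + 1 + 1) = 2 * ((t + 1) * (2 * t + 1)) := by ring
  omega

lemma neg_one_pow_congr {a b : ℕ} (h : a % 2 = b % 2) : ((-1 : ℤ)) ^ a = (-1) ^ b := by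
  rcases Nat.even_or_odd a with he | ho
  · have ha2 : a % 2 = 0 := Nat.even_iff.1 he
    have hb : Even b := Nat.even_iff.2 (by omega)
    rw [he.neg_one_pow, hb.neg_one_pow]
  · have ha2 : a % 2 = 1 := Nat.odd_iff.1 ho
    have hb : Odd b := Nat.odd_iff.2 (by omega)
    rw [ho.neg_one_pow, hb.neg_one_pow]

lemma coeff_sign_X_pow (j e k : ℕ) :
    (PowerSeries.coeff (R := ℤ) k) ((-1) ^ j * (X : PowerSeries ℤ) ^ e) =
      (-1) ^ j * (if k = e then 1 else 0) := by
  have hC : ((-1 : PowerSeries ℤ)) ^ j = C ((-1 : ℤ) ^ j) := by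
    rw [map_pow, map_neg, map_one]
  rw [hC, coeff_C_mul, coeff_X_pow]

/-- the bilateral sum is `psiNeg ℓ` up to degree `n`. -/
lemma psi_sum (ℓ n : ℕ) (hℓ : 1 ≤ ℓ) :
    EqN n (∑ m ∈ range (2 * (n + 1) + 1), (-1) ^ ((n + 1) + m) * (X : PowerSeries ℤ) ^ (ℓ * e2 (n + 1) m))
      (psiNeg ℓ) := by
  classical
  set N := n + 1 with hN
  intro k hk
  rw [map_sum]
  rw [sum_congr rfl (fun m _ => coeff_sign_X_pow (N + m) (ℓ * e2 N m) k)]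
  rw [psiNeg, coeff_mk]
  by_cases hex : ∃ m', ℓ * (m' * (m' + 1) / 2) = k
  · rw [if_pos hex]
    obtain ⟨m', hm'⟩ := hex
    have hdiv : k / ℓ = T m' := by
      rw [← hm']
      exact Nat.mul_div_cancel_left _ (by omega)
    have hkT : k = ℓ * T m' := by rw [← hm']; rfl
    rcases Nat.even_or_odd m' with he | ho
    · obtain ⟨u, hu⟩ := he
      have hm2 : m' = 2 * u := by omega
      have hkk : k = ℓ * (u * (2 * u + 1)) := by rw [hkT, hm2, T_even]
      have hun : u ≤ n := by
        have h1 : u ≤ u * (2 * u + 1) := Nat.le_mul_of_pos_right u (by omega)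
        have h2 : u * (2 * u + 1) ≤ ℓ * (u * (2 * u + 1)) := Nat.le_mul_of_pos_left _ (by omega)
        omega
      have hwmem : N - u ∈ range (2 * N + 1) := by rw [mem_range]; omega
      have hew : e2 N (N - u) = u * (2 * u + 1) := e2_sub (by omega)
      rw [Finset.sum_eq_single_of_mem (N - u) hwmem ?side]
      · rw [if_pos (by rw [hew]; exact hkk), mul_one, hdiv, hm2, T_even]
        apply neg_one_pow_congr
        have h3 : u * (2 * u + 1) = 2 * (u * u) + u := by ring
        omega
      case side =>
        intro b _ hb
        rw [if_neg, mul_zero]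
        intro hkb
        apply hb
        apply e2_inj (N := N)
        have : ℓ * e2 N b = ℓ * e2 N (N - u) := by rw [hew, ← hkk, hkb]
        exact Nat.eq_of_mul_eq_mul_left (by omega) this
    · obtain ⟨t, ht⟩ := ho
      have hkk : k = ℓ * ((t + 1) * (2 * t + 1)) := by rw [hkT, ht, T_odd]
      have htn : t + 1 ≤ n + 1 := by
        have h1 : t + 1 ≤ (t + 1) * (2 * t + 1) := Nat.le_mul_of_pos_right _ (by omega)
        have h2 : (t + 1) * (2 * t + 1) ≤ ℓ * ((t + 1) * (2 * t + 1)) :=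
          Nat.le_mul_of_pos_left _ (by omega)
        omega
      have hwmem : N + (t + 1) ∈ range (2 * N + 1) := by rw [mem_range]; omega
      have hew : e2 N (N + (t + 1)) = (t + 1) * (2 * t + 1) := by
        rw [e2_add]
        have h9 : 2 * (t + 1) - 1 = 2 * t + 1 := by omega
        rw [h9]
      rw [Finset.sum_eq_single_of_mem (N + (t + 1)) hwmem ?side]
      · rw [if_pos (by rw [hew]; exact hkk), mul_one, hdiv, ht, T_odd]
        apply neg_one_pow_congr
        have h3 : (t + 1) * (2 * t + 1) = 2 * (t * t + t) + (t + 1) := by ring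
        omega
      case side =>
        intro b _ hb
        rw [if_neg, mul_zero]
        intro hkb
        apply hb
        apply e2_inj (N := N)
        have : ℓ * e2 N b = ℓ * e2 N (N + (t + 1)) := by rw [hew, ← hkk, hkb]
        exact Nat.eq_of_mul_eq_mul_left (by omega) this
  · rw [if_neg hex]
    apply sum_eq_zero
    intro m _
    rw [if_neg, mul_zero]
    intro hkm
    apply hex
    rcases e2_spec N m with ⟨t, _, he⟩ | ⟨u, _, _, _, he⟩
    · rcases Nat.eq_zero_or_pos t with rfl | htp
      · exact ⟨0, by simp [hkm, he]⟩
      · obtain ⟨b, rfl⟩ : ∃ b, t = b + 1 := ⟨t - 1, by omega⟩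
        refine ⟨2 * b + 1, ?_⟩
        have h1 : (2 * b + 1) * (2 * b + 1 + 1) / 2 = T (2 * b + 1) := rfl
        rw [h1, T_odd, hkm, he]
        have h9 : 2 * (b + 1) - 1 = 2 * b + 1 := by omega
        rw [h9]
    · refine ⟨2 * u, ?_⟩
      have h1 : (2 * u) * (2 * u + 1) / 2 = T (2 * u) := rfl
      rw [h1, T_even, hkm, he]


/-- `gb * (Q;Q)_{2N} ≡ 1` for kept indices. -/
lemma gbC_one (ℓ n m : ℕ) (hℓ : 1 ≤ ℓ) (hm : m ≤ 2 * (n + 1)) (he : e2 (n + 1) m ≤ n) :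
    EqN n (gb ((X : PowerSeries ℤ) ^ (4 * ℓ)) (2 * (n + 1)) m *
      ∏ k ∈ range (2 * (n + 1)), (1 - ((X : PowerSeries ℤ) ^ (4 * ℓ)) ^ (k + 1))) 1 := by
  set N := n + 1 with hN
  set Q : PowerSeries ℤ := (X : PowerSeries ℤ) ^ (4 * ℓ) with hQ
  obtain ⟨hb1, hb2⟩ := kept_bounds hm he
  obtain ⟨r, hr⟩ : ∃ r, 2 * N = m + r := ⟨2 * N - m, by omega⟩
  have hone : ∀ j : ℕ, n < 4 * j → EqN n ((1 : PowerSeries ℤ) - Q ^ j) 1 := by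
    intro j hj
    rw [hQ, ← pow_mul]
    apply EqN_one_sub_pow
    calc n < 4 * j := hj
      _ ≤ 4 * ℓ * j := Nat.mul_le_mul_right j (by omega)
  have hsplit : ∏ k ∈ range (2 * N), ((1 : PowerSeries ℤ) - Q ^ (k + 1)) =
      (∏ k ∈ range m, (1 - Q ^ (k + 1))) * ∏ k ∈ range r, (1 - Q ^ (m + k + 1)) := by
    rw [hr, prod_range_add]
  rw [hsplit, ← mul_assoc, gb_mul Q (by omega : m ≤ 2 * N)]
  have h1 : EqN n (∏ k ∈ range m, ((1 : PowerSeries ℤ) - Q ^ (2 * N - m + k + 1))) 1 := by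
    apply EqN_prod_one
    intro k hk
    apply hone
    calc n < 4 * (2 * N - m + 1) := hb1
      _ ≤ 4 * (2 * N - m + k + 1) := by omega
  have h2 : EqN n (∏ k ∈ range r, ((1 : PowerSeries ℤ) - Q ^ (m + k + 1))) 1 := by
    apply EqN_prod_one
    intro k hk
    apply hone
    calc n < 4 * (m + 1) := hb2
      _ ≤ 4 * (m + k + 1) := by omega
  have h3 := h1.mul h2
  rw [mul_one] at h3
  exact h3

/-- Gauss's identity (scale ℓ), up to degree n. -/
lemma key (ℓ n : ℕ) (hℓ : 1 ≤ ℓ) :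
    EqN n ((∏ i ∈ range (n + 1),
        ((1 - (X : PowerSeries ℤ) ^ (ℓ * (4 * i + 1))) * (1 - X ^ (ℓ * (4 * i + 3))))) *
        ∏ k ∈ range (2 * (n + 1)), (1 - (X : PowerSeries ℤ) ^ (ℓ * (4 * k + 4))))
      (psiNeg ℓ) := by
  set N := n + 1 with hN
  set Q : PowerSeries ℤ := (X : PowerSeries ℤ) ^ (4 * ℓ) with hQ
  have hCQ : ∏ k ∈ range (2 * N), ((1 : PowerSeries ℤ) - X ^ (ℓ * (4 * k + 4))) =
      ∏ k ∈ range (2 * N), ((1 : PowerSeries ℤ) - Q ^ (k + 1)) := by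
    apply prod_congr rfl
    intro k _
    rw [hQ, ← pow_mul]
    congr 2
    ring
  set C : PowerSeries ℤ := ∏ k ∈ range (2 * N), ((1 : PowerSeries ℤ) - Q ^ (k + 1)) with hC
  have harr : (∏ i ∈ range N,
        ((1 - (X : PowerSeries ℤ) ^ (ℓ * (4 * i + 1))) * (1 - X ^ (ℓ * (4 * i + 3))))) *
        ∏ k ∈ range (2 * N), (1 - (X : PowerSeries ℤ) ^ (ℓ * (4 * k + 4))) =
      ∑ m ∈ range (2 * N + 1),
        ((-1) ^ (N + m) * (X : PowerSeries ℤ) ^ (ℓ * e2 N m)) *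
          (gb Q (2 * N) m * C) := by
    rw [step_exact ℓ N, hCQ, mul_assoc, sum_mul, mul_sum]
    apply sum_congr rfl
    intro m _
    rw [pow_add]
    ring
  rw [harr]
  apply EqN.trans _ (psi_sum ℓ n hℓ)
  apply EqN.sum
  intro m hm
  rw [mem_range] at hm
  by_cases hkeep : ℓ * e2 N m ≤ n
  · have he2 : e2 N m ≤ n := le_trans (Nat.le_mul_of_pos_left _ (by omega)) hkeep
    have hg := gbC_one ℓ n m hℓ (by omega) he2
    have h4 := (EqN.refl (n := n) ((-1) ^ (N + m) * (X : PowerSeries ℤ) ^ (ℓ * e2 N m))).mul hg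
    rw [mul_one] at h4
    exact h4
  · -- both sides vanish up to degree n
    have hz1 : EqN n (((-1) ^ (N + m) * (X : PowerSeries ℤ) ^ (ℓ * e2 N m)) * (gb Q (2 * N) m * C)) 0 := by
      have := EqN_zero_of_X_dvd (by omega : n < ℓ * e2 N m)
        ((-1 : PowerSeries ℤ) ^ (N + m) * (gb Q (2 * N) m * C))
      apply EqN.trans _ this
      intro j hj
      congr 1
      ring
    have hz2 : EqN n ((-1 : PowerSeries ℤ) ^ (N + m) * (X : PowerSeries ℤ) ^ (ℓ * e2 N m)) 0 := by
      have := EqN_zero_of_X_dvd (by omega : n < ℓ * e2 N m) ((-1 : PowerSeries ℤ) ^ (N + m))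
      apply EqN.trans _ this
      intro j hj
      congr 1
      ring
    exact hz1.trans hz2.symm


section Classical2
open scoped Classical

/-- A convenience constructor for the power series whose coefficients indicate a subset. -/
noncomputable def indicatorSeries (α : Type*) [Semiring α] (s : Set ℕ) : PowerSeries α :=
  PowerSeries.mk fun n => if n ∈ s then 1 else 0

variable {α : Type*}

theorem coeff_indicator (s : Set ℕ) [Semiring α] (n : ℕ) :
    coeff (R := α) n (indicatorSeries _ s) = if n ∈ s then 1 else 0 :=
  coeff_mk _ _

theorem coeff_indicator_pos (s : Set ℕ) [Semiring α] (n : ℕ) (h : n ∈ s) :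
    coeff (R := α) n (indicatorSeries _ s) = 1 := by rw [coeff_indicator, if_pos h]

theorem coeff_indicator_neg (s : Set ℕ) [Semiring α] (n : ℕ) (h : n ∉ s) :
    coeff (R := α) n (indicatorSeries _ s) = 0 := by rw [coeff_indicator, if_neg h]

theorem two_series' (i : ℕ) (hi : 0 < i) [Semiring α] :
    1 + (X : PowerSeries α) ^ i = indicatorSeries α {0, i} := by
  ext n
  simp only [coeff_indicator, coeff_one, coeff_X_pow, Set.mem_insert_iff, Set.mem_singleton_iff,
    map_add]
  rcases Nat.eq_zero_or_pos n with rfl | hn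
  · rw [if_pos rfl, if_neg (by omega), if_pos (Or.inl rfl), add_zero]
  · rw [if_neg (by omega)]
    by_cases h : n = i
    · rw [if_pos h, if_pos (Or.inr h), zero_add]
    · rw [if_neg h, if_neg (by rintro (h0 | h0) <;> omega), add_zero]

/-- `(1 - X^i)⁻¹` explicitly, over any commutative ring. -/
theorem ind_mul_one_sub (i : ℕ) (hi : 0 < i) :
    indicatorSeries ℤ {k | i ∣ k} * (1 - (X : PowerSeries ℤ) ^ i) = 1 := by
  ext n
  rw [mul_sub, mul_one, map_sub, PowerSeries.coeff_one]
  rcases Nat.eq_zero_or_pos n with rfl | hn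
  · rw [if_pos rfl]
    rw [coeff_zero_eq_constantCoeff, map_mul, map_pow, constantCoeff_X]
    rw [zero_pow (by omega), mul_zero, sub_zero]
    rw [← coeff_zero_eq_constantCoeff, coeff_indicator, if_pos (show (0:ℕ) ∈ {k | i ∣ k} from dvd_zero i)]
  · rw [if_neg (by omega)]
    rw [PowerSeries.coeff_mul_X_pow' _ i n]
    simp only [coeff_indicator, Set.mem_setOf_eq]
    by_cases h : i ≤ n
    · rw [if_pos h]
      have hiff : i ∣ n ↔ i ∣ n - i := by
        constructor
        · intro hd; exact Nat.dvd_sub hd dvd_rfl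
        · intro hx
          have h9 : n - i + i = n := by omega
          exact h9 ▸ Nat.dvd_add hx dvd_rfl
      by_cases hd : i ∣ n
      · rw [if_pos hd, if_pos (hiff.1 hd)]; ring
      · rw [if_neg hd, if_neg (fun hx => absurd (hiff.2 hx) hd)]; ring
    · rw [if_neg h, if_neg, sub_zero]
      intro hd
      exact h (Nat.le_of_dvd hn hd)

-- The main workhorse (copied from Archive/Wiedijk100Theorems/Partition.lean).
theorem partialGF_prop (α : Type*) [CommSemiring α] (n : ℕ) (s : Finset ℕ) (hs : ∀ i ∈ s, 0 < i)
    (c : ℕ → Set ℕ) (hc : ∀ i, i ∉ s → 0 ∈ c i) :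
    #{p : n.Partition | (∀ j, p.parts.count j ∈ c j) ∧ ∀ j ∈ p.parts, j ∈ s} =
      coeff (R := α) n (∏ i ∈ s, indicatorSeries α ((· * i) '' c i)) := by
  simp_rw [coeff_prod, coeff_indicator, prod_boole, sum_boole]
  apply congr_arg
  simp only [mem_univ, forall_true_left, not_and, not_forall, exists_prop,
    Set.mem_image, not_exists]
  set φ : (a : Nat.Partition n) →
    a ∈ filter (fun p ↦ (∀ (j : ℕ), Multiset.count j p.parts ∈ c j) ∧ ∀ j ∈ p.parts, j ∈ s) univ →
    ℕ →₀ ℕ := fun p _ => {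
      toFun := fun i => Multiset.count i p.parts • i
      support := Finset.filter (fun i => i ≠ 0) p.parts.toFinset
      mem_support_toFun := fun a => by
        simp only [smul_eq_mul, ne_eq, mul_eq_zero, Multiset.count_eq_zero]
        rw [not_or, not_not]
        simp only [Multiset.mem_toFinset, not_not, mem_filter] }
  refine Finset.card_bij φ ?_ ?_ ?_
  · intro a ha
    simp only [φ, not_forall, not_exists, not_and, exists_prop, mem_filter]
    rw [mem_finsuppAntidiag]
    dsimp only [ne_eq, smul_eq_mul, id_eq, eq_mpr_eq_cast, le_eq_subset, Finsupp.coe_mk]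
    simp only [mem_univ, forall_true_left, not_and, not_forall, exists_prop,
      mem_filter, true_and] at ha
    refine ⟨⟨?_, fun i ↦ ?_⟩, fun i _ ↦ ⟨a.parts.count i, ha.1 i, rfl⟩⟩
    · conv_rhs => simp [← a.parts_sum]
      rw [sum_multiset_count_of_subset _ s]
      · simp only [smul_eq_mul]
      · intro i
        simp only [Multiset.mem_toFinset, not_not, mem_filter]
        apply ha.2
    · simp only [ne_eq, Multiset.mem_toFinset, not_not, mem_filter, and_imp]
      exact fun hi _ ↦ ha.2 i hi
  · intro p₁ hp₁ p₂ hp₂ h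
    apply Nat.Partition.ext
    simp only [true_and, mem_univ, mem_filter] at hp₁ hp₂
    ext i
    simp only [φ, ne_eq, Multiset.mem_toFinset, not_not, smul_eq_mul, Finsupp.mk.injEq] at h
    by_cases hi : i = 0
    · rw [hi]
      rw [Multiset.count_eq_zero_of_notMem]
      · rw [Multiset.count_eq_zero_of_notMem]
        intro a; exact Nat.lt_irrefl 0 (hs 0 (hp₂.2 0 a))
      intro a; exact Nat.lt_irrefl 0 (hs 0 (hp₁.2 0 a))
    · rw [← mul_left_inj' hi]
      rw [funext_iff] at h
      exact h.2 i
  · simp only [φ, mem_filter, mem_finsuppAntidiag, mem_univ, exists_prop, true_and, and_assoc]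
    rintro f ⟨hf, hf₃, hf₄⟩
    have hf' : f ∈ finsuppAntidiag s n := mem_finsuppAntidiag.mpr ⟨hf, hf₃⟩
    simp only [mem_finsuppAntidiag] at hf'
    refine ⟨⟨∑ i ∈ s, Multiset.replicate (f i / i) i, ?_, ?_⟩, ?_, ?_, ?_⟩
    · intro i hi
      simp only [exists_prop, Multiset.mem_sum, mem_map, Function.Embedding.coeFn_mk] at hi
      rcases hi with ⟨t, ht, z⟩
      apply hs
      rwa [Multiset.eq_of_mem_replicate z]
    · simp_rw [Multiset.sum_sum, Multiset.sum_replicate, Nat.nsmul_eq_mul]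
      rw [← hf'.1]
      refine sum_congr rfl fun i hi => Nat.div_mul_cancel ?_
      rcases hf₄ i hi with ⟨w, _, hw₂⟩
      rw [← hw₂]
      exact dvd_mul_left _ _
    · intro i
      simp_rw [Multiset.count_sum', Multiset.count_replicate, sum_ite_eq']
      split_ifs with h
      · rcases hf₄ i h with ⟨w, hw₁, hw₂⟩
        rwa [← hw₂, Nat.mul_div_cancel _ (hs i h)]
      · exact hc _ h
    · intro i hi
      rw [Multiset.mem_sum] at hi
      rcases hi with ⟨j, hj₁, hj₂⟩
      rwa [Multiset.eq_of_mem_replicate hj₂]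
    · ext i
      simp_rw [Multiset.count_sum', Multiset.count_replicate, sum_ite_eq']
      simp only [ne_eq, Multiset.mem_toFinset, not_not, smul_eq_mul, ite_mul,
        zero_mul, Finsupp.coe_mk]
      split_ifs with h
      · apply Nat.div_mul_cancel
        rcases hf₄ i h with ⟨w, _, hw₂⟩
        apply Dvd.intro_left _ hw₂
      · apply symm
        rw [← Finsupp.notMem_support_iff]
        exact notMem_mono hf'.2 h


def s3 (n : ℕ) : Finset ℕ := (range (n + 1)).filter (fun i => 0 < i ∧ ¬(3 ∣ i))
def sOdd (n : ℕ) : Finset ℕ := (s3 n).filter (fun i => Odd i)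
def sEven (n : ℕ) : Finset ℕ := (s3 n).filter (fun i => ¬ Odd i)

noncomputable def Pgf (n : ℕ) : PowerSeries ℤ :=
  (∏ i ∈ sOdd n, (1 + (X : PowerSeries ℤ) ^ i)) *
    ∏ i ∈ sEven n, indicatorSeries ℤ {k | i ∣ k}

lemma pod_coeff {n m : ℕ} (hm : m ≤ n) : (pod 3 m : ℤ) = coeff (R := ℤ) m (Pgf n) := by
  have hGF := partialGF_prop ℤ m (s3 n) (fun i hi => by
      simp only [s3, mem_filter] at hi; exact hi.2.1)
    (fun i => if Odd i then ({0, 1} : Set ℕ) else Set.univ)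
    (fun i _ => by by_cases h : Odd i <;> simp [h])
  -- identify the LHS count with pod 3 m
  have hcard : (#{p : m.Partition |
      (∀ j, p.parts.count j ∈ (if Odd j then ({0, 1} : Set ℕ) else Set.univ)) ∧
        ∀ j ∈ p.parts, j ∈ s3 n} : ℤ) = (pod 3 m : ℤ) := by
    have : pod 3 m = #{p : m.Partition |
        (∀ j, p.parts.count j ∈ (if Odd j then ({0, 1} : Set ℕ) else Set.univ)) ∧
          ∀ j ∈ p.parts, j ∈ s3 n} := by
      rw [pod, Nat.card_eq_fintype_card, Fintype.card_subtype]
      congr 1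
      apply filter_congr
      intro p _
      constructor
      · rintro ⟨h1, h2⟩
        constructor
        · intro j
          split_ifs with hj
          · have := h2 j hj
            interval_cases h : p.parts.count j
            · exact Or.inl rfl
            · exact Or.inr rfl
          · trivial
        · intro j hj
          simp only [s3, mem_filter, mem_range]
          refine ⟨?_, p.parts_pos hj, h1 j hj⟩
          have hle : j ≤ m := by
            have := Multiset.single_le_sum (fun _ _ => Nat.zero_le _) j hj
            rw [p.parts_sum] at this
            omega
          omega
      · rintro ⟨h1, h2⟩
        constructor
        · intro i hi
          have := h2 i hi
          simp only [s3, mem_filter] at this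
          exact this.2.2
        · intro i hi
          have := h1 i
          rw [if_pos hi] at this
          rcases this with h | h
          · simp [h]
          · simp only [Set.mem_singleton_iff] at h
            omega
    rw [this]
  rw [← hcard, hGF]
  -- identify the product with Pgf n
  congr 1
  rw [Pgf, ← prod_filter_mul_prod_filter_not (s3 n) (fun i => Odd i)]
  congr 1
  · apply prod_congr rfl
    intro i hi
    simp only [sOdd, mem_filter] at hi
    have h0 : 0 < i := by
      simp only [s3, mem_filter] at hi
      exact hi.1.2.1
    rw [if_pos hi.2]
    have himg : ((· * i) '' {0, 1} : Set ℕ) = {0, i} := by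
      ext x
      simp only [Set.mem_image, Set.mem_insert_iff, Set.mem_singleton_iff]
      constructor
      · rintro ⟨a, (rfl | rfl), rfl⟩ <;> simp
      · rintro (rfl | rfl)
        · exact ⟨0, Or.inl rfl, by ring⟩
        · exact ⟨1, Or.inr rfl, by ring⟩
    rw [himg, ← two_series' i h0]
  · apply prod_congr rfl
    intro i hi
    simp only [sEven, mem_filter] at hi
    rw [if_neg hi.2]
    have himg : ((· * i) '' Set.univ : Set ℕ) = {k | i ∣ k} := by
      ext x
      simp only [Set.mem_image, Set.mem_univ, true_and, Set.mem_setOf_eq]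
      constructor
      · rintro ⟨a, rfl⟩; exact Dvd.intro_left a rfl
      · rintro ⟨c, rfl⟩; exact ⟨c, by ring⟩
    rw [himg]


lemma mem_sOdd {n i : ℕ} : i ∈ sOdd n ↔ i ≤ n ∧ 0 < i ∧ ¬(3 ∣ i) ∧ i % 2 = 1 := by
  simp only [sOdd, s3, mem_filter, mem_range, Nat.odd_iff]
  omega

lemma mem_sEven {n i : ℕ} : i ∈ sEven n ↔ i ≤ n ∧ 0 < i ∧ ¬(3 ∣ i) ∧ i % 2 = 0 := by
  simp only [sEven, s3, mem_filter, mem_range, Nat.odd_iff]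
  omega


def SL (n : ℕ) : Finset ℕ :=
  (((range (n + 1)).image (fun i => 4 * i + 1) ∪ (range (n + 1)).image (fun i => 4 * i + 3)) ∪
    (range (2 * (n + 1))).image (fun k => 4 * k + 4)) ∪ (sOdd n).image (fun i => 2 * i)

def SR (n : ℕ) : Finset ℕ :=
  (((range (n + 1)).image (fun i => 3 * (4 * i + 1)) ∪
      (range (n + 1)).image (fun i => 3 * (4 * i + 3))) ∪
    (range (2 * (n + 1))).image (fun k => 3 * (4 * k + 4))) ∪ (sEven n ∪ sOdd n)

lemma memSL {n j : ℕ} (hj : j ≤ n) : j ∈ SL n ↔ (1 ≤ j ∧ j % 12 ≠ 6) := by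
  simp only [SL, mem_union, mem_image, mem_range]
  constructor
  · rintro (((⟨i, hi, rfl⟩ | ⟨i, hi, rfl⟩) | ⟨k, hk, rfl⟩) | ⟨i, hi, rfl⟩)
    · omega
    · omega
    · omega
    · rw [mem_sOdd] at hi
      omega
  · rintro ⟨h1, h12⟩
    rcases (by omega : j % 4 = 0 ∨ j % 4 = 1 ∨ j % 4 = 2 ∨ j % 4 = 3) with h | h | h | h
    · exact Or.inl (Or.inr ⟨j / 4 - 1, by omega, by omega⟩)
    · exact Or.inl (Or.inl (Or.inl ⟨j / 4, by omega, by omega⟩))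
    · exact Or.inr ⟨j / 2, by rw [mem_sOdd]; omega, by omega⟩
    · exact Or.inl (Or.inl (Or.inr ⟨j / 4, by omega, by omega⟩))

lemma memSR {n j : ℕ} (hj : j ≤ n) : j ∈ SR n ↔ (1 ≤ j ∧ j % 12 ≠ 6) := by
  simp only [SR, mem_union, mem_image, mem_range]
  constructor
  · rintro (((⟨i, hi, rfl⟩ | ⟨i, hi, rfl⟩) | ⟨k, hk, rfl⟩) | (hi | hi))
    · omega
    · omega
    · omega
    · rw [mem_sEven] at hi; omega
    · rw [mem_sOdd] at hi; omega
  · rintro ⟨h1, h12⟩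
    by_cases h3 : 3 ∣ j
    · rcases (by omega : j % 12 = 0 ∨ j % 12 = 3 ∨ j % 12 = 9) with h | h | h
      · exact Or.inl (Or.inr ⟨j / 12 - 1, by omega, by omega⟩)
      · exact Or.inl (Or.inl (Or.inl ⟨j / 12, by omega, by omega⟩))
      · exact Or.inl (Or.inl (Or.inr ⟨j / 12, by omega, by omega⟩))
    · rcases (by omega : j % 2 = 0 ∨ j % 2 = 1) with h | h
      · exact Or.inr (Or.inl (by rw [mem_sEven]; omega))
      · exact Or.inr (Or.inr (by rw [mem_sOdd]; omega))

lemma prod_one_sub_eqN {n : ℕ} (S1 S2 : Finset ℕ)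
    (h : ∀ j ≤ n, (j ∈ S1 ↔ j ∈ S2)) :
    EqN n (∏ j ∈ S1, (1 - (X : PowerSeries ℤ) ^ j)) (∏ j ∈ S2, (1 - X ^ j)) := by
  have hkey : ∀ S : Finset ℕ, EqN n (∏ j ∈ S, (1 - (X : PowerSeries ℤ) ^ j))
      (∏ j ∈ S.filter (· ≤ n), (1 - X ^ j)) := by
    intro S
    rw [← prod_filter_mul_prod_filter_not S (· ≤ n)]
    have h1 : EqN n (∏ j ∈ S.filter (fun j => ¬ j ≤ n), (1 - (X : PowerSeries ℤ) ^ j)) 1 := by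
      apply EqN_prod_one
      intro j hj
      rw [mem_filter] at hj
      exact EqN_one_sub_pow (by omega)
    have h2 := (EqN.refl (n := n) (∏ j ∈ S.filter (· ≤ n), (1 - (X : PowerSeries ℤ) ^ j))).mul h1
    rw [mul_one] at h2
    exact h2
  have hfeq : S1.filter (· ≤ n) = S2.filter (· ≤ n) := by
    ext j
    simp only [mem_filter]
    exact ⟨fun ⟨a, b⟩ => ⟨(h j b).1 a, b⟩, fun ⟨a, b⟩ => ⟨(h j b).2 a, b⟩⟩
  refine (hkey S1).trans ?_
  rw [hfeq]
  exact (hkey S2).symm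

lemma prodL (n : ℕ) :
    ((∏ i ∈ range (n + 1),
        ((1 - (X : PowerSeries ℤ) ^ (1 * (4 * i + 1))) * (1 - X ^ (1 * (4 * i + 3))))) *
        ∏ k ∈ range (2 * (n + 1)), (1 - (X : PowerSeries ℤ) ^ (1 * (4 * k + 4)))) *
      ∏ i ∈ sOdd n, (1 - (X : PowerSeries ℤ) ^ (2 * i)) =
    ∏ j ∈ SL n, (1 - (X : PowerSeries ℤ) ^ j) := by
  have d1 : Disjoint ((range (n + 1)).image (fun i => 4 * i + 1))
      ((range (n + 1)).image (fun i => 4 * i + 3)) := by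
    simp only [Finset.disjoint_left, mem_image, mem_range]
    rintro a ⟨i, hi, rfl⟩ ⟨i', hi', h⟩
    omega
  have d2 : Disjoint ((range (n + 1)).image (fun i => 4 * i + 1) ∪
      (range (n + 1)).image (fun i => 4 * i + 3))
      ((range (2 * (n + 1))).image (fun k => 4 * k + 4)) := by
    simp only [Finset.disjoint_left, mem_union, mem_image, mem_range]
    rintro a (⟨i, hi, rfl⟩ | ⟨i, hi, rfl⟩) ⟨k, hk, h⟩ <;> omega
  have d3 : Disjoint (((range (n + 1)).image (fun i => 4 * i + 1) ∪
      (range (n + 1)).image (fun i => 4 * i + 3)) ∪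
      (range (2 * (n + 1))).image (fun k => 4 * k + 4)) ((sOdd n).image (fun i => 2 * i)) := by
    simp only [Finset.disjoint_left, mem_union, mem_image, mem_range]
    rintro a ((⟨i, hi, rfl⟩ | ⟨i, hi, rfl⟩) | ⟨k, hk, rfl⟩) ⟨i', hi', h⟩ <;>
      rw [mem_sOdd] at hi' <;> omega
  rw [SL, prod_union d3, prod_union d2, prod_union d1,
    prod_image (by intro a _ b _ h; simp only at h; omega), prod_image (by intro a _ b _ h; simp only at h; omega),
    prod_image (by intro a _ b _ h; simp only at h; omega), prod_image (by intro a _ b _ h; simp only at h; omega)]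
  simp only [one_mul]
  rw [prod_mul_distrib]

lemma prodR (n : ℕ) :
    ((∏ i ∈ range (n + 1),
        ((1 - (X : PowerSeries ℤ) ^ (3 * (4 * i + 1))) * (1 - X ^ (3 * (4 * i + 3))))) *
        ∏ k ∈ range (2 * (n + 1)), (1 - (X : PowerSeries ℤ) ^ (3 * (4 * k + 4)))) *
      ((∏ i ∈ sEven n, (1 - (X : PowerSeries ℤ) ^ i)) * ∏ i ∈ sOdd n, (1 - X ^ i)) =
    ∏ j ∈ SR n, (1 - (X : PowerSeries ℤ) ^ j) := by
  have d1 : Disjoint ((range (n + 1)).image (fun i => 3 * (4 * i + 1)))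
      ((range (n + 1)).image (fun i => 3 * (4 * i + 3))) := by
    simp only [Finset.disjoint_left, mem_image, mem_range]
    rintro a ⟨i, hi, rfl⟩ ⟨i', hi', h⟩
    omega
  have d2 : Disjoint ((range (n + 1)).image (fun i => 3 * (4 * i + 1)) ∪
      (range (n + 1)).image (fun i => 3 * (4 * i + 3)))
      ((range (2 * (n + 1))).image (fun k => 3 * (4 * k + 4))) := by
    simp only [Finset.disjoint_left, mem_union, mem_image, mem_range]
    rintro a (⟨i, hi, rfl⟩ | ⟨i, hi, rfl⟩) ⟨k, hk, h⟩ <;> omega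
  have d4 : Disjoint (sEven n) (sOdd n) := by
    simp only [Finset.disjoint_left]
    intro a ha hb
    rw [mem_sEven] at ha
    rw [mem_sOdd] at hb
    omega
  have d3 : Disjoint (((range (n + 1)).image (fun i => 3 * (4 * i + 1)) ∪
      (range (n + 1)).image (fun i => 3 * (4 * i + 3))) ∪
      (range (2 * (n + 1))).image (fun k => 3 * (4 * k + 4))) (sEven n ∪ sOdd n) := by
    simp only [Finset.disjoint_left, mem_union, mem_image, mem_range]
    rintro a ((⟨i, hi, rfl⟩ | ⟨i, hi, rfl⟩) | ⟨k, hk, rfl⟩) (hi' | hi') <;>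
      first
        | (rw [mem_sEven] at hi'; omega)
        | (rw [mem_sOdd] at hi'; omega)
  rw [SR, prod_union d3, prod_union d2, prod_union d1, prod_union d4,
    prod_image (by intro a _ b _ h; simp only at h; omega), prod_image (by intro a _ b _ h; simp only at h; omega),
    prod_image (by intro a _ b _ h; simp only at h; omega)]
  rw [prod_mul_distrib]


-- new material
lemma cc_prod_one_sub (S : Finset ℕ) (h : ∀ i ∈ S, 0 < i) :
    constantCoeff (R := ℤ) (∏ i ∈ S, (1 - (X : PowerSeries ℤ) ^ i)) = 1 := by
  rw [map_prod]
  rw [prod_congr rfl (fun i hi => ?_), prod_const_one]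
  rw [map_sub, map_one, map_pow, constantCoeff_X, zero_pow (by have := h i hi; omega), sub_zero]

lemma main_eqn (n : ℕ) : EqN n (psiNeg 1 * Pgf n) (psiNeg 3) := by
  apply EqN.cancel (C := (∏ i ∈ sEven n, (1 - (X : PowerSeries ℤ) ^ i)) * ∏ i ∈ sOdd n, (1 - X ^ i))
  · rw [map_mul, cc_prod_one_sub _ (fun i hi => (mem_sEven.1 hi).2.1),
      cc_prod_one_sub _ (fun i hi => (mem_sOdd.1 hi).2.1), one_mul]
  have hLX : psiNeg 1 * Pgf n *
      ((∏ i ∈ sEven n, (1 - (X : PowerSeries ℤ) ^ i)) * ∏ i ∈ sOdd n, (1 - X ^ i)) =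
      psiNeg 1 * ∏ i ∈ sOdd n, (1 - (X : PowerSeries ℤ) ^ (2 * i)) := by
    rw [Pgf]
    have h1 : (∏ i ∈ sOdd n, (1 + (X : PowerSeries ℤ) ^ i)) * ∏ i ∈ sOdd n, (1 - X ^ i) =
        ∏ i ∈ sOdd n, (1 - (X : PowerSeries ℤ) ^ (2 * i)) := by
      rw [← prod_mul_distrib]
      apply prod_congr rfl
      intro i _
      have hx : (X : PowerSeries ℤ) ^ (2 * i) = X ^ i * X ^ i := by rw [two_mul, pow_add]
      rw [hx]; ring
    have h2 : (∏ i ∈ sEven n, indicatorSeries ℤ {k | i ∣ k}) *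
        ∏ i ∈ sEven n, (1 - (X : PowerSeries ℤ) ^ i) = 1 := by
      rw [← prod_mul_distrib]
      rw [prod_congr rfl (fun i hi => ind_mul_one_sub i (mem_sEven.1 hi).2.1), prod_const_one]
    calc psiNeg 1 * ((∏ i ∈ sOdd n, (1 + (X : PowerSeries ℤ) ^ i)) *
            ∏ i ∈ sEven n, indicatorSeries ℤ {k | i ∣ k}) *
          ((∏ i ∈ sEven n, (1 - (X : PowerSeries ℤ) ^ i)) * ∏ i ∈ sOdd n, (1 - X ^ i)) =
        psiNeg 1 * (((∏ i ∈ sOdd n, (1 + (X : PowerSeries ℤ) ^ i)) * ∏ i ∈ sOdd n, (1 - X ^ i)) *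
          ((∏ i ∈ sEven n, indicatorSeries ℤ {k | i ∣ k}) *
            ∏ i ∈ sEven n, (1 - (X : PowerSeries ℤ) ^ i))) := by ring
      _ = _ := by rw [h1, h2, mul_one]
  rw [hLX]
  have c1 : EqN n (psiNeg 1 * ∏ i ∈ sOdd n, (1 - (X : PowerSeries ℤ) ^ (2 * i)))
      ((((∏ i ∈ range (n + 1),
        ((1 - (X : PowerSeries ℤ) ^ (1 * (4 * i + 1))) * (1 - X ^ (1 * (4 * i + 3))))) *
        ∏ k ∈ range (2 * (n + 1)), (1 - (X : PowerSeries ℤ) ^ (1 * (4 * k + 4))))) *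
        ∏ i ∈ sOdd n, (1 - (X : PowerSeries ℤ) ^ (2 * i))) :=
    (key 1 n le_rfl).symm.mul (EqN.refl _)
  have c2 : EqN n (∏ j ∈ SL n, (1 - (X : PowerSeries ℤ) ^ j))
      (∏ j ∈ SR n, (1 - (X : PowerSeries ℤ) ^ j)) := by
    apply prod_one_sub_eqN
    intro j hj
    rw [memSL hj, memSR hj]
  have c3 : EqN n ((((∏ i ∈ range (n + 1),
        ((1 - (X : PowerSeries ℤ) ^ (3 * (4 * i + 1))) * (1 - X ^ (3 * (4 * i + 3))))) *
        ∏ k ∈ range (2 * (n + 1)), (1 - (X : PowerSeries ℤ) ^ (3 * (4 * k + 4))))) *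
        ((∏ i ∈ sEven n, (1 - (X : PowerSeries ℤ) ^ i)) * ∏ i ∈ sOdd n, (1 - X ^ i)))
      (psiNeg 3 * ((∏ i ∈ sEven n, (1 - (X : PowerSeries ℤ) ^ i)) * ∏ i ∈ sOdd n, (1 - X ^ i))) :=
    (key 3 n (by omega)).mul (EqN.refl _)
  refine c1.trans ?_
  rw [prodL n]
  refine c2.trans ?_
  rw [← prodR n]
  exact c3

noncomputable def Fser : PowerSeries ℤ := PowerSeries.mk fun k => (pod 3 k : ℤ)

theorem global_eqn : psiNeg 1 * Fser = psiNeg 3 := by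
  ext k
  have hF : EqN k Fser (Pgf k) := by
    intro m hm
    rw [Fser, coeff_mk]
    exact pod_coeff hm
  have h1 : EqN k (psiNeg 1 * Fser) (psiNeg 1 * Pgf k) := (EqN.refl _).mul hF
  exact (h1.trans (main_eqn k)) k le_rfl

lemma EqN.pow {R : Type*} [CommRing R] {n : ℕ} {f g : PowerSeries R} (h : EqN n f g) (m : ℕ) :
    EqN n (f ^ m) (g ^ m) := by
  induction m with
  | zero => simpa using EqN.refl 1
  | succ m ih => rw [pow_succ, pow_succ]; exact ih.mul h

lemma cube_eq : (PowerSeries.map (Int.castRingHom (ZMod 3)) (psiNeg 1)) ^ 3 =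
    PowerSeries.map (Int.castRingHom (ZMod 3)) (psiNeg 3) := by
  haveI : Fact (Nat.Prime 3) := ⟨by norm_num⟩
  ext k
  set φ := Int.castRingHom (ZMod 3)
  set f := PowerSeries.map φ (psiNeg 1) with hf
  set p := trunc (k + 1) f with hp
  have hEq : EqN k f ((p : Polynomial (ZMod 3)) : PowerSeries (ZMod 3)) := by
    intro m hm
    rw [Polynomial.coeff_coe, hp, coeff_trunc, if_pos (by omega)]
  have h3 : coeff (R := (ZMod 3)) k (f ^ 3) =
      coeff (R := (ZMod 3)) k (((p : Polynomial (ZMod 3)) : PowerSeries (ZMod 3)) ^ 3) :=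
    (hEq.pow 3) k le_rfl
  rw [h3, ← Polynomial.coe_pow]
  have hp3 : p ^ 3 = Polynomial.expand (ZMod 3) 3 p := by
    have hchar := Polynomial.map_frobenius_expand 3 p
    rw [ZMod.frobenius_zmod, Polynomial.map_id] at hchar
    exact hchar.symm
  rw [hp3, Polynomial.coeff_coe, Polynomial.coeff_expand (by norm_num)]
  rw [PowerSeries.coeff_map]
  by_cases h3d : 3 ∣ k
  · rw [if_pos h3d, hp, coeff_trunc, if_pos (by omega), hf, PowerSeries.coeff_map]
    rw [psiNeg, psiNeg, coeff_mk, coeff_mk]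
    simp only [one_mul, Nat.div_one]
    by_cases hex : ∃ m, m * (m + 1) / 2 = k / 3
    · rw [if_pos hex]
      rw [if_pos ?ex2]
      case ex2 =>
        obtain ⟨m, hm⟩ := hex
        exact ⟨m, by omega⟩
    · rw [if_neg hex, if_neg ?ex3]
      case ex3 =>
        rintro ⟨m, hm⟩
        exact hex ⟨m, by omega⟩
  · rw [if_neg h3d, psiNeg, coeff_mk, if_neg, map_zero]
    rintro ⟨m, hm⟩
    exact h3d ⟨m * (m + 1) / 2, hm.symm⟩


end Classical2
end PodAux

theorem pod_three_gf_congr (n : ℕ) :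
    (pod 3 n : ℤ) ≡ PowerSeries.coeff (R := ℤ) n (psiNeg 1 ^ 2) [ZMOD 3] := by
  classical
  set φ := Int.castRingHom (ZMod 3)
  have hglobal := PodAux.global_eqn
  have hm := congrArg (PowerSeries.map φ) hglobal
  rw [map_mul, ← PodAux.cube_eq] at hm
  have hψ0 : PowerSeries.map φ (psiNeg 1) ≠ 0 := by
    intro h0
    have h1 : PowerSeries.coeff (R := (ZMod 3)) 0 (PowerSeries.map φ (psiNeg 1)) = 0 := by
      rw [h0, map_zero]
    rw [PowerSeries.coeff_map] at h1
    have h2 : PowerSeries.coeff (R := ℤ) 0 (psiNeg 1) = 1 := by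
      rw [psiNeg, PowerSeries.coeff_mk, if_pos ⟨0, by simp⟩]
      simp
    rw [h2] at h1
    simp at h1
  have hcancel : PowerSeries.map φ PodAux.Fser = (PowerSeries.map φ (psiNeg 1)) ^ 2 := by
    apply mul_left_cancel₀ hψ0
    rw [hm]
    ring
  have hcoeff := congrArg (PowerSeries.coeff (R := (ZMod 3)) n) hcancel
  rw [PowerSeries.coeff_map, ← map_pow, PowerSeries.coeff_map] at hcoeff
  rw [PodAux.Fser, PowerSeries.coeff_mk] at hcoeff
  have : ((pod 3 n : ℤ) : ZMod 3) = ((PowerSeries.coeff (R := ℤ) n (psiNeg 1 ^ 2) : ℤ) : ZMod 3) := by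
    exact_mod_cast hcoeff
  exact (ZMod.intCast_eq_intCast_iff _ _ _).1 this
end

section
/- Let a(n) be defined by q ∏_{m≥1} (1-q^{4m})^2 (1-q^{16m})^2 (1-q^{8m})^{-2} = ∑_{n≥1} a(n) q^n. Then a(p) = 0 for every prime p with p ≡ 3 (mod 4). -/
/-- A power series is supported on multiples of `m`. -/
private def Supp (m : ℕ) (f : PowerSeries ℤ) : Prop :=
  ∀ k, ¬ m ∣ k → PowerSeries.coeff (R := ℤ) k f = 0

private lemma supp_one (m : ℕ) : Supp m 1 := by
  intro k hk
  have : k ≠ 0 := by rintro rfl; exact hk (dvd_zero m)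
  simp [PowerSeries.coeff_one, this]

private lemma supp_mul {m : ℕ} {f g : PowerSeries ℤ} (hf : Supp m f) (hg : Supp m g) :
    Supp m (f * g) := by
  intro k hk
  rw [PowerSeries.coeff_mul]
  apply Finset.sum_eq_zero
  rintro ⟨i, j⟩ hij
  rw [Finset.HasAntidiagonal.mem_antidiagonal] at hij
  by_cases hi : m ∣ i
  · have hj : ¬ m ∣ j := fun h => hk (hij ▸ dvd_add hi h)
    simp [hg j hj]
  · simp [hf i hi]

private lemma supp_one_sub_X_pow {m e : ℕ} (hme : m ∣ e) :
    Supp m (1 - PowerSeries.X ^ e : PowerSeries ℤ) := by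
  intro k hk
  have h0 : k ≠ 0 := by rintro rfl; exact hk (dvd_zero m)
  have h1 : k ≠ e := by rintro rfl; exact hk hme
  rw [map_sub, PowerSeries.coeff_one, PowerSeries.coeff_X_pow]
  simp [h0, h1]

private lemma supp_sq {m : ℕ} {f : PowerSeries ℤ} (hf : Supp m f) : Supp m (f ^ 2) := by
  rw [sq]; exact supp_mul hf hf

private lemma supp_prod {m : ℕ} (s : Finset ℕ) (F : ℕ → PowerSeries ℤ)
    (h : ∀ i ∈ s, Supp m (F i)) : Supp m (∏ i ∈ s, F i) := by
  classical
  refine Finset.prod_induction F (Supp m) (fun _ _ => supp_mul) (supp_one m) h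

theorem eta_quotient_coeff_prime_vanish (a : ℕ → ℤ)
    (ha : ∀ n : ℕ,
      PowerSeries.coeff (R := ℤ) n
          (PowerSeries.mk a *
            ∏ m ∈ Finset.range (n + 1), (1 - PowerSeries.X ^ (8 * (m + 1))) ^ 2) =
        PowerSeries.coeff (R := ℤ) n
          (PowerSeries.X *
            ∏ m ∈ Finset.range (n + 1),
              ((1 - PowerSeries.X ^ (4 * (m + 1))) ^ 2 *
                (1 - PowerSeries.X ^ (16 * (m + 1))) ^ 2)))
    (ha0 : a 0 = 0) (p : ℕ) (hp : p.Prime) (hp4 : p % 4 = 3) :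
    a p = 0 := by
  have key : ∀ n, n % 4 ≠ 1 → a n = 0 := by
    intro n
    induction n using Nat.strong_induction_on with
    | _ n ih =>
      intro hn
      have h := ha n
      -- the RHS coefficient vanishes
      have hG : Supp 4 (∏ m ∈ Finset.range (n + 1),
          ((1 - PowerSeries.X ^ (4 * (m + 1))) ^ 2 *
            (1 - PowerSeries.X ^ (16 * (m + 1))) ^ 2) : PowerSeries ℤ) := by
        apply supp_prod
        intro i _
        exact supp_mul (supp_sq (supp_one_sub_X_pow (by omega)))
          (supp_sq (supp_one_sub_X_pow (by omega)))
      have hR : PowerSeries.coeff (R := ℤ) n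
          (PowerSeries.X *
            ∏ m ∈ Finset.range (n + 1),
              ((1 - PowerSeries.X ^ (4 * (m + 1))) ^ 2 *
                (1 - PowerSeries.X ^ (16 * (m + 1))) ^ 2)) = 0 := by
        rcases n with _ | k
        · simp
        · rw [PowerSeries.coeff_succ_X_mul]
          apply hG
          omega
      -- the D-series is supported on multiples of 8 with constant term 1
      set D : PowerSeries ℤ :=
        ∏ m ∈ Finset.range (n + 1), (1 - PowerSeries.X ^ (8 * (m + 1))) ^ 2 with hD
      have hDsupp : Supp 8 D := by
        apply supp_prod
        intro i _
        exact supp_sq (supp_one_sub_X_pow (by omega))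
      have hD0 : PowerSeries.coeff (R := ℤ) 0 D = 1 := by
        rw [PowerSeries.coeff_zero_eq_constantCoeff, hD, map_prod]
        apply Finset.prod_eq_one
        intro i _
        rw [map_pow, map_sub, map_one]
        have : (PowerSeries.constantCoeff (R := ℤ)) (PowerSeries.X ^ (8 * (i + 1))) = 0 := by
          rw [map_pow, PowerSeries.constantCoeff_X]
          exact zero_pow (by omega)
        rw [this]; ring
      -- compute the LHS coefficient
      have hL : PowerSeries.coeff (R := ℤ) n (PowerSeries.mk a * D) = a n := by
        rw [PowerSeries.coeff_mul]
        rw [Finset.sum_eq_single (n, 0)]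
        · simp [hD0]
        · rintro ⟨i, j⟩ hij hne
          rw [Finset.HasAntidiagonal.mem_antidiagonal] at hij
          have hj : j ≠ 0 := by
            rintro rfl
            exact hne (by simpa using congrArg (·, (0:ℕ)) (by omega : i = n))
          by_cases h8 : 8 ∣ j
          · have hi4 : i % 4 ≠ 1 := by
              obtain ⟨c, rfl⟩ := h8
              omega
            have hilt : i < n := by omega
            rw [PowerSeries.coeff_mk, ih i hilt hi4, zero_mul]
          · rw [hDsupp j h8, mul_zero]
        · intro hmem
          exact absurd (Finset.HasAntidiagonal.mem_antidiagonal.2 (by omega)) hmem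
      rw [hL, hR] at h
      exact h
  exact key p (by omega)
end

section
/- Let ℓ be an odd integer greater than 1, p a prime divisor of ℓ, and a the largest positive integer such that p^a divides ℓ. Then for any positive integer k, the formal power series (in q) corresponding to the eta quotient η(24z)^{p^{a+k}-1} η(48z) η(24ℓz) η(96ℓz) / (η(96z) η(48ℓz) η(24p^a z)^{p^k}) is congruent modulo p^k to ∑_{n≥0} pod_ℓ(n) q^{24n + 3(ℓ-1)}. -/
/-- Truncation (to `N` factors) of the eta-product `η(δz) = q^{δ/24} ∏_{m ≥ 1} (1 - q^{δm})`;
for the coefficient of `q^n` any truncation with `N ≥ n` agrees with the full product. -/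
noncomputable def etaT (δ N : ℕ) : PowerSeries ℤ :=
  PowerSeries.X ^ (δ / 24) * ∏ m ∈ Finset.range N, (1 - PowerSeries.X ^ (δ * (m + 1)))

open PowerSeries

namespace EtaPodAux

noncomputable section

variable {α : Type*}

open Finset

open scoped Classical

/-- The partial product for the generating function for odd partitions.
TODO: As `m` tends to infinity, this converges (in the `X`-adic topology).

If `m` is sufficiently large, the `i`th coefficient gives the number of odd partitions of the
natural number `i`: proved in `oddGF_prop`.
It is stated for an arbitrary field `α`, though it usually suffices to use `ℚ` or `ℝ`.
-/
def partialOddGF (m : ℕ) [Field α] :=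
  ∏ i ∈ range m, (1 - (X : PowerSeries α) ^ (2 * i + 1))⁻¹

/-- The partial product for the generating function for distinct partitions.
TODO: As `m` tends to infinity, this converges (in the `X`-adic topology).

If `m` is sufficiently large, the `i`th coefficient gives the number of distinct partitions of the
natural number `i`: proved in `distinctGF_prop`.
It is stated for an arbitrary commutative semiring `α`, though it usually suffices to use `ℕ`, `ℚ`
or `ℝ`.
-/
def partialDistinctGF (m : ℕ) [CommSemiring α] :=
  ∏ i ∈ range m, (1 + (X : PowerSeries α) ^ (i + 1))

open Finset.HasAntidiagonal

universe u
variable {ι : Type u}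

/-- A convenience constructor for the power series whose coefficients indicate a subset. -/
def indicatorSeries (α : Type*) [Semiring α] (s : Set ℕ) : PowerSeries α :=
  PowerSeries.mk fun n => if n ∈ s then 1 else 0

theorem coeff_indicator (s : Set ℕ) [Semiring α] (n : ℕ) :
    coeff (R := α) n (indicatorSeries _ s) = if n ∈ s then 1 else 0 :=
  coeff_mk _ _

theorem coeff_indicator_pos (s : Set ℕ) [Semiring α] (n : ℕ) (h : n ∈ s) :
    coeff (R := α) n (indicatorSeries _ s) = 1 := by rw [coeff_indicator, if_pos h]

theorem coeff_indicator_neg (s : Set ℕ) [Semiring α] (n : ℕ) (h : n ∉ s) :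
    coeff (R := α) n (indicatorSeries _ s) = 0 := by rw [coeff_indicator, if_neg h]

theorem constantCoeff_indicator (s : Set ℕ) [Semiring α] :
    constantCoeff (R := α) (indicatorSeries _ s) = if 0 ∈ s then 1 else 0 :=
  rfl

theorem two_series (i : ℕ) [Semiring α] :
    1 + (X : PowerSeries α) ^ i.succ = indicatorSeries α {0, i.succ} := by
  ext n
  simp only [coeff_indicator, coeff_one, coeff_X_pow, Set.mem_insert_iff, Set.mem_singleton_iff,
    map_add]
  cases' n with d
  · simp [(Nat.succ_ne_zero i).symm]
  · simp [Nat.succ_ne_zero d]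

theorem num_series' [Field α] (i : ℕ) :
    (1 - (X : PowerSeries α) ^ (i + 1))⁻¹ = indicatorSeries α {k | i + 1 ∣ k} := by
  rw [PowerSeries.inv_eq_iff_mul_eq_one]
  · ext n
    cases n with
    | zero => simp [mul_sub, zero_pow, constantCoeff_indicator]
    | succ n =>
      simp only [coeff_one, if_false, mul_sub, mul_one, coeff_indicator,
        LinearMap.map_sub, reduceCtorEq]
      simp_rw [coeff_mul, coeff_X_pow, coeff_indicator, @boole_mul _ _ _ _]
      simp only [Set.mem_setOf_eq]
      erw [sum_ite, sum_ite]
      simp_rw [@filter_filter _ _ _ _ _, sum_const_zero, add_zero, sum_const, nsmul_eq_mul, mul_one,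
        sub_eq_iff_eq_add, zero_add]
      symm
      split_ifs with h
      · suffices #{a ∈ antidiagonal (n + 1) | i + 1 ∣ a.fst ∧ a.snd = i + 1} = 1 by
          convert congr_arg ((↑) : ℕ → α) this; norm_cast
        rw [card_eq_one]
        cases' h with p hp
        refine ⟨((i + 1) * (p - 1), i + 1), ?_⟩
        ext ⟨a₁, a₂⟩
        simp only [mem_filter, Prod.mk_inj, HasAntidiagonal.mem_antidiagonal, mem_singleton]
        constructor
        · rintro ⟨a_left, ⟨a, rfl⟩, rfl⟩
          refine ⟨?_, rfl⟩
          rw [Nat.mul_sub_left_distrib, ← hp, ← a_left, mul_one, Nat.add_sub_cancel]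
        · rintro ⟨rfl, rfl⟩
          match p with
          | 0 => rw [mul_zero] at hp; cases hp
          | p + 1 => rw [hp]; simp [mul_add]
      · suffices #{a ∈ antidiagonal (n + 1) | i + 1 ∣ a.fst ∧ a.snd = i + 1} = 0 by
          convert congr_arg ((↑) : ℕ → α) this; norm_cast
        rw [card_eq_zero]
        apply eq_empty_of_forall_notMem
        simp only [Prod.forall, mem_filter, not_and, HasAntidiagonal.mem_antidiagonal]
        rintro _ h₁ h₂ ⟨a, rfl⟩ rfl
        apply h
        simp [← h₂]
  · simp [zero_pow]

def mkOdd : ℕ ↪ ℕ :=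
  ⟨fun i => 2 * i + 1, fun x y h => by linarith⟩

-- The main workhorse of the partition theorem proof.
theorem partialGF_prop (α : Type*) [CommSemiring α] (n : ℕ) (s : Finset ℕ) (hs : ∀ i ∈ s, 0 < i)
    (c : ℕ → Set ℕ) (hc : ∀ i, i ∉ s → 0 ∈ c i) :
    #{p : n.Partition | (∀ j, p.parts.count j ∈ c j) ∧ ∀ j ∈ p.parts, j ∈ s} =
      coeff n (∏ i ∈ s, indicatorSeries α ((· * i) '' c i)) := by
  simp_rw [coeff_prod, coeff_indicator, prod_boole, sum_boole]
  apply congr_arg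
  simp only [mem_univ, forall_true_left, not_and, not_forall, exists_prop,
    Set.mem_image, not_exists]
  set φ : (a : Nat.Partition n) →
    a ∈ filter (fun p ↦ (∀ (j : ℕ), Multiset.count j p.parts ∈ c j) ∧ ∀ j ∈ p.parts, j ∈ s) univ →
    ℕ →₀ ℕ := fun p _ => {
      toFun := fun i => Multiset.count i p.parts • i
      support := Finset.filter (fun i => i ≠ 0) p.parts.toFinset
      mem_support_toFun := fun a => by
        simp only [smul_eq_mul, ne_eq, mul_eq_zero, Multiset.count_eq_zero]
        rw [not_or, not_not]
        simp only [Multiset.mem_toFinset, not_not, mem_filter] }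
  refine Finset.card_bij φ ?_ ?_ ?_
  · intro a ha
    simp only [φ, not_forall, not_exists, not_and, exists_prop, mem_filter]
    rw [mem_finsuppAntidiag]
    dsimp only [ne_eq, smul_eq_mul, id_eq, eq_mpr_eq_cast, le_eq_subset, Finsupp.coe_mk]
    simp only [mem_univ, forall_true_left, not_and, not_forall, exists_prop,
      mem_filter, true_and] at ha
    refine ⟨⟨?_, fun i ↦ ?_⟩, fun i _ ↦ ⟨a.parts.count i, ha.1 i, rfl⟩⟩
    · conv_rhs => simp [← a.parts_sum]
      rw [sum_multiset_count_of_subset _ s]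
      · simp only [smul_eq_mul]
      · intro i
        simp only [Multiset.mem_toFinset, not_not, mem_filter]
        apply ha.2
    · simp only [ne_eq, Multiset.mem_toFinset, not_not, mem_filter, and_imp]
      exact fun hi _ ↦ ha.2 i hi
  · intro p₁ hp₁ p₂ hp₂ h
    apply Nat.Partition.ext
    simp only [true_and, mem_univ, mem_filter] at hp₁ hp₂
    ext i
    simp only [φ, ne_eq, Multiset.mem_toFinset, not_not, smul_eq_mul, Finsupp.mk.injEq] at h
    by_cases hi : i = 0
    · rw [hi]
      rw [Multiset.count_eq_zero_of_notMem]
      · rw [Multiset.count_eq_zero_of_notMem]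
        intro a; exact Nat.lt_irrefl 0 (hs 0 (hp₂.2 0 a))
      intro a; exact Nat.lt_irrefl 0 (hs 0 (hp₁.2 0 a))
    · rw [← mul_left_inj' hi]
      rw [funext_iff] at h
      exact h.2 i
  · simp only [φ, mem_filter, mem_finsuppAntidiag, mem_univ, exists_prop, true_and, and_assoc]
    rintro f ⟨hf, hf₃, hf₄⟩
    have hf' : f ∈ finsuppAntidiag s n := mem_finsuppAntidiag.mpr ⟨hf, hf₃⟩
    simp only [mem_finsuppAntidiag] at hf'
    refine ⟨⟨∑ i ∈ s, Multiset.replicate (f i / i) i, ?_, ?_⟩, ?_, ?_, ?_⟩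
    · intro i hi
      simp only [exists_prop, Multiset.mem_sum, mem_map, Function.Embedding.coeFn_mk] at hi
      rcases hi with ⟨t, ht, z⟩
      apply hs
      rwa [Multiset.eq_of_mem_replicate z]
    · simp_rw [Multiset.sum_sum, Multiset.sum_replicate, Nat.nsmul_eq_mul]
      rw [← hf'.1]
      refine sum_congr rfl fun i hi => Nat.div_mul_cancel ?_
      rcases hf₄ i hi with ⟨w, _, hw₂⟩
      rw [← hw₂]
      exact dvd_mul_left _ _
    · intro i
      simp_rw [Multiset.count_sum', Multiset.count_replicate, sum_ite_eq']
      split_ifs with h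
      · rcases hf₄ i h with ⟨w, hw₁, hw₂⟩
        rwa [← hw₂, Nat.mul_div_cancel _ (hs i h)]
      · exact hc _ h
    · intro i hi
      rw [Multiset.mem_sum] at hi
      rcases hi with ⟨j, hj₁, hj₂⟩
      rwa [Multiset.eq_of_mem_replicate hj₂]
    · ext i
      simp_rw [Multiset.count_sum', Multiset.count_replicate, sum_ite_eq']
      simp only [ne_eq, Multiset.mem_toFinset, not_not, smul_eq_mul, ite_mul,
        zero_mul, Finsupp.coe_mk]
      split_ifs with h
      · apply Nat.div_mul_cancel
        rcases hf₄ i h with ⟨w, _, hw₂⟩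
        apply Dvd.intro_left _ hw₂
      · apply symm
        rw [← Finsupp.notMem_support_iff]
        exact notMem_mono hf'.2 h


end
end EtaPodAux


namespace EtaPodAux
open PowerSeries Finset
open scoped Classical

noncomputable section

/-- coefficientwise equality up to degree `n`. -/
def EqN {R : Type*} [CommRing R] (n : ℕ) (f g : PowerSeries R) : Prop :=
  ∀ j ≤ n, coeff j f = coeff j g

namespace EqN

variable {R : Type*} [CommRing R] {n : ℕ}

theorem refl (f : PowerSeries R) : EqN n f f := fun _ _ => rfl

theorem symm {f g : PowerSeries R} (h : EqN n f g) : EqN n g f := fun j hj => (h j hj).symm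

theorem trans {f g h : PowerSeries R} (h1 : EqN n f g) (h2 : EqN n g h) : EqN n f h :=
  fun j hj => (h1 j hj).trans (h2 j hj)

theorem of_eq {f g : PowerSeries R} (h : f = g) : EqN n f g := h ▸ refl f

theorem mul {f f' g g' : PowerSeries R} (hf : EqN n f f') (hg : EqN n g g') :
    EqN n (f * g) (f' * g') := by
  intro j hj
  rw [coeff_mul, coeff_mul]
  refine Finset.sum_congr rfl ?_
  rintro ⟨u, v⟩ huv
  rw [Finset.HasAntidiagonal.mem_antidiagonal] at huv
  rw [hf u (by omega), hg v (by omega)]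

theorem prod {ι : Type*} (s : Finset ι) (f g : ι → PowerSeries R)
    (h : ∀ i ∈ s, EqN n (f i) (g i)) : EqN n (∏ i ∈ s, f i) (∏ i ∈ s, g i) := by
  induction s using Finset.induction with
  | empty => exact refl 1
  | @insert x s hx ih =>
    rw [Finset.prod_insert hx, Finset.prod_insert hx]
    exact (h x (Finset.mem_insert_self x s)).mul
      (ih fun i hi => h i (Finset.mem_insert_of_mem hi))

theorem pow {f g : PowerSeries R} (m : ℕ) (h : EqN n f g) : EqN n (f ^ m) (g ^ m) := by
  induction m with
  | zero => exact refl 1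
  | succ m ih => rw [pow_succ, pow_succ]; exact ih.mul h

end EqN

theorem eqN_one_sub_X_pow {R : Type*} [CommRing R] {n j : ℕ} (h : n < j) :
    EqN n (1 - X ^ j : PowerSeries R) 1 := by
  intro m hm
  rw [map_sub, coeff_X_pow, if_neg (by omega), sub_zero]

/-- substitution `X ↦ X ^ 24` (implemented by hand). -/
def sub24 (f : PowerSeries ℚ) : PowerSeries ℚ :=
  PowerSeries.mk fun j => if 24 ∣ j then coeff (j / 24) f else 0

theorem coeff_sub24 (f : PowerSeries ℚ) (j : ℕ) :
    coeff j (sub24 f) = if 24 ∣ j then coeff (j / 24) f else 0 := coeff_mk _ _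

theorem sub24_one : sub24 1 = 1 := by
  ext j
  simp only [sub24, coeff_mk, coeff_one]
  split_ifs <;> first | rfl | (exfalso; omega) | norm_num | (simp_all; omega)

theorem sub24_one_sub_X_pow (e : ℕ) : sub24 (1 - X ^ e) = 1 - X ^ (24 * e) := by
  ext j
  simp only [sub24, coeff_mk, map_sub, coeff_one, coeff_X_pow]
  split_ifs <;> first | rfl | (exfalso; omega) | norm_num | (simp_all; omega)

theorem sub24_X_pow (e : ℕ) : sub24 (X ^ e) = X ^ (24 * e) := by
  ext j
  simp only [sub24, coeff_mk, coeff_X_pow]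
  split_ifs <;> first | rfl | (exfalso; omega) | norm_num | (simp_all; omega)

theorem sub24_mul (f g : PowerSeries ℚ) : sub24 (f * g) = sub24 f * sub24 g := by
  ext j
  rw [PowerSeries.coeff_mul, coeff_sub24]
  have hz : ∀ x ∈ (Finset.HasAntidiagonal.antidiagonal j).filter (fun x : ℕ × ℕ => ¬(24 ∣ x.1 ∧ 24 ∣ x.2)),
      coeff x.1 (sub24 f) * coeff x.2 (sub24 g) = 0 := by
    rintro x hx
    simp only [Finset.mem_filter, Finset.HasAntidiagonal.mem_antidiagonal] at hx
    rw [coeff_sub24, coeff_sub24]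
    by_cases hu : 24 ∣ x.1
    · rw [if_neg (fun hv => hx.2 ⟨hu, hv⟩), mul_zero]
    · rw [if_neg hu, zero_mul]
  rw [← Finset.sum_filter_add_sum_filter_not (Finset.HasAntidiagonal.antidiagonal j)
      (fun x : ℕ × ℕ => 24 ∣ x.1 ∧ 24 ∣ x.2), Finset.sum_eq_zero hz, add_zero]
  by_cases hj : 24 ∣ j
  · obtain ⟨t, rfl⟩ := hj
    rw [if_pos ⟨t, rfl⟩, Nat.mul_div_cancel_left _ (by norm_num), PowerSeries.coeff_mul]
    refine Finset.sum_nbij' (fun x : ℕ × ℕ => (24 * x.1, 24 * x.2))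
      (fun x : ℕ × ℕ => (x.1 / 24, x.2 / 24)) ?_ ?_ ?_ ?_ ?_
    · rintro ⟨u, v⟩ hx
      rw [Finset.HasAntidiagonal.mem_antidiagonal] at hx
      simp only [Finset.mem_filter, Finset.HasAntidiagonal.mem_antidiagonal]
      refine ⟨by omega, ⟨u, rfl⟩, ⟨v, rfl⟩⟩
    · rintro ⟨u, v⟩ hx
      simp only [Finset.mem_filter, Finset.HasAntidiagonal.mem_antidiagonal] at hx
      rw [Finset.HasAntidiagonal.mem_antidiagonal]
      obtain ⟨hs, ⟨cu, rfl⟩, ⟨cv, rfl⟩⟩ := hx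
      simp only [Nat.mul_div_cancel_left _ (by norm_num : 0 < 24)]
      omega
    · rintro ⟨u, v⟩ _
      simp only [Nat.mul_div_cancel_left _ (by norm_num : 0 < 24)]
    · rintro ⟨u, v⟩ hx
      simp only [Finset.mem_filter, Finset.HasAntidiagonal.mem_antidiagonal] at hx
      obtain ⟨hs, ⟨cu, rfl⟩, ⟨cv, rfl⟩⟩ := hx
      simp only [Nat.mul_div_cancel_left _ (by norm_num : 0 < 24)]
    · rintro ⟨u, v⟩ hx
      rw [coeff_sub24, coeff_sub24]
      simp only
      rw [if_pos ⟨u, rfl⟩, if_pos ⟨v, rfl⟩,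
        Nat.mul_div_cancel_left _ (by norm_num : 0 < 24),
        Nat.mul_div_cancel_left _ (by norm_num : 0 < 24)]
  · rw [if_neg hj]
    symm
    apply Finset.sum_eq_zero
    intro x hx
    simp only [Finset.mem_filter, Finset.HasAntidiagonal.mem_antidiagonal] at hx
    exact absurd (hx.1 ▸ Nat.dvd_add hx.2.1 hx.2.2) hj

theorem sub24_prod {ι : Type*} (s : Finset ι) (f : ι → PowerSeries ℚ) :
    sub24 (∏ i ∈ s, f i) = ∏ i ∈ s, sub24 (f i) := by
  induction s using Finset.induction with
  | empty => simpa using sub24_one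
  | @insert x s hx ih => rw [Finset.prod_insert hx, Finset.prod_insert hx, sub24_mul, ih]

theorem sub24_eqN {n : ℕ} {f g : PowerSeries ℚ} (h : EqN n f g) :
    EqN n (sub24 f) (sub24 g) := by
  intro j hj
  rw [coeff_sub24, coeff_sub24]
  split_ifs with h24
  · rw [h (j / 24) (le_trans (Nat.div_le_self _ _) hj)]
  · rfl

end
end EtaPodAux


namespace EtaPodAux
open PowerSeries Finset
open scoped Classical
noncomputable section

variable {p : ℕ}

/-- `f ≡ g` modulo `p^j`, as divisibility in `ℤ⟦X⟧`. -/
def DC (p j : ℕ) (f g : PowerSeries ℤ) : Prop :=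
  (PowerSeries.C ((p : ℤ) ^ j)) ∣ (f - g)

namespace DC

theorem refl (p j : ℕ) (f : PowerSeries ℤ) : DC p j f f := by simp [DC]

theorem trans {j : ℕ} {f g h : PowerSeries ℤ} (h1 : DC p j f g) (h2 : DC p j g h) :
    DC p j f h := by
  have : f - h = (f - g) + (g - h) := by ring
  rw [DC, this]
  exact dvd_add h1 h2

theorem symm {j : ℕ} {f g : PowerSeries ℤ} (h1 : DC p j f g) : DC p j g f := by
  rw [DC, show g - f = -(f - g) by ring]
  exact (dvd_neg).mpr h1

theorem of_le {j j' : ℕ} (hj : j' ≤ j) {f g : PowerSeries ℤ} (h : DC p j f g) :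
    DC p j' f g :=
  dvd_trans (map_dvd (PowerSeries.C) (pow_dvd_pow (p : ℤ) hj)) h

theorem mul {j : ℕ} {f f' g g' : PowerSeries ℤ} (hf : DC p j f f') (hg : DC p j g g') :
    DC p j (f * g) (f' * g') := by
  have : f * g - f' * g' = (f - f') * g + f' * (g - g') := by ring
  rw [DC, this]
  exact dvd_add (hf.mul_right _) (hg.mul_left _)

theorem pow {j : ℕ} {f g : PowerSeries ℤ} (m : ℕ) (h : DC p j f g) :
    DC p j (f ^ m) (g ^ m) := by
  induction m with
  | zero => simpa using refl p j 1
  | succ m ih => rw [pow_succ, pow_succ]; exact ih.mul h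

theorem prod {j : ℕ} {ι : Type*} (s : Finset ι) (f g : ι → PowerSeries ℤ)
    (h : ∀ i ∈ s, DC p j (f i) (g i)) :
    DC p j (∏ i ∈ s, f i) (∏ i ∈ s, g i) := by
  induction s using Finset.induction with
  | empty => exact refl p j 1
  | @insert x s hx ih =>
    rw [Finset.prod_insert hx, Finset.prod_insert hx]
    exact (h x (Finset.mem_insert_self x s)).mul (ih fun i hi => h i (Finset.mem_insert_of_mem hi))

/-- the key lifting-the-exponent style step: congruence mod `p^j` is raised to
congruence mod `p^(j+1)` by taking `p`-th powers. -/
theorem step (hp : p.Prime) {j : ℕ} (hj : 1 ≤ j) {f g : PowerSeries ℤ} (h : DC p j f g) :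
    DC p (j + 1) (f ^ p) (g ^ p) := by
  obtain ⟨w, hw⟩ := h
  have hf : f = g + PowerSeries.C ((p : ℤ) ^ j) * w := by rw [← hw]; ring
  rw [DC, hf, add_pow]
  rw [Finset.sum_range_succ]
  simp only [Nat.choose_self, Nat.cast_one, mul_one, Nat.sub_self, pow_zero]
  rw [add_sub_cancel_right]
  apply Finset.dvd_sum
  intro i hi
  rw [Finset.mem_range] at hi
  rcases Nat.eq_zero_or_pos i with rfl | hipos
  · -- term `(C p^j * w) ^ p * choose p 0`
    have h1 : (PowerSeries.C ((p : ℤ) ^ (j + 1))) ∣ (PowerSeries.C ((p : ℤ) ^ j) * w) ^ p := by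
      rw [mul_pow, ← map_pow, ← pow_mul]
      exact ((map_dvd (PowerSeries.C) (pow_dvd_pow (p : ℤ)
        (by nlinarith [hp.two_le] : j + 1 ≤ j * p)))).mul_right _
    simpa using h1
  · -- term `g ^ i * (C p^j * w) ^ (p - i) * choose p i`
    have h1 : (PowerSeries.C ((p : ℤ) ^ j)) ∣ (PowerSeries.C ((p : ℤ) ^ j) * w) ^ (p - i) := by
      have : (PowerSeries.C ((p : ℤ) ^ j) * w) ^ (p - i)
          = (PowerSeries.C ((p : ℤ) ^ j) * w) * (PowerSeries.C ((p : ℤ) ^ j) * w) ^ (p - i - 1) := by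
        rw [← pow_succ']
        congr 1
        omega
      rw [this]
      exact (dvd_mul_right _ _).mul_right _
    have h2 : ((p : PowerSeries ℤ)) ∣ ((p.choose i : ℕ) : PowerSeries ℤ) :=
      Nat.cast_dvd_cast (Nat.Prime.dvd_choose_self hp (by omega) hi)
    have h3 : PowerSeries.C ((p : ℤ) ^ (j + 1)) = PowerSeries.C ((p : ℤ) ^ j) * (p : PowerSeries ℤ) := by
      rw [pow_succ, map_mul, map_natCast]
    rw [h3]
    exact mul_dvd_mul (h1.mul_left _) h2

end DC

/-- coefficientwise divisibility gives `C`-divisibility. -/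
theorem C_dvd_of_coeff_dvd {c : ℤ} {f : PowerSeries ℤ} (h : ∀ j, c ∣ coeff j f) :
    (PowerSeries.C c) ∣ f := by
  refine ⟨PowerSeries.mk fun j => (coeff j f) / c, ?_⟩
  ext j
  rw [coeff_C_mul, coeff_mk, Int.mul_ediv_cancel' (h j)]

/-- base case: `(1 - X^d)^(p^a) ≡ 1 - X^(d * p^a)  [mod p]`. -/
theorem base (hp : p.Prime) (d a : ℕ) :
    DC p 1 ((1 - X ^ d : PowerSeries ℤ) ^ p ^ a) (1 - X ^ (d * p ^ a)) := by
  haveI : Fact p.Prime := ⟨hp⟩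
  haveI : CharP (PowerSeries (ZMod p)) p :=
    charP_of_injective_ringHom (PowerSeries.C_injective (R := ZMod p)) p
  rw [DC, pow_one]
  apply C_dvd_of_coeff_dvd
  intro j
  have hmap : PowerSeries.map (Int.castRingHom (ZMod p))
      (((1 - X ^ d : PowerSeries ℤ) ^ p ^ a) - (1 - X ^ (d * p ^ a))) = 0 := by
    simp only [map_sub, map_pow, map_one, PowerSeries.map_X]
    rw [sub_pow_char_pow, one_pow, ← pow_mul, mul_comm d]
    ring
  have := congrArg (coeff j) hmap
  rw [PowerSeries.coeff_map, map_zero] at this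
  exact_mod_cast (ZMod.intCast_zmod_eq_zero_iff_dvd _ p).mp this

theorem iterate (hp : p.Prime) {u v : PowerSeries ℤ} (h : DC p 1 u v) (m : ℕ) :
    DC p (m + 1) (u ^ p ^ (m + 1)) (v ^ p ^ (m + 1)) := by
  induction m with
  | zero => rw [pow_one]; exact h.pow p
  | succ m ih =>
    have := DC.step hp (by omega) ih
    rw [← pow_mul, ← pow_mul, ← pow_succ] at this
    exact this

theorem main_pow_congr (hp : p.Prime) (d a k : ℕ) (hk : 1 ≤ k) :
    DC p k (((1 - X ^ d : PowerSeries ℤ)) ^ p ^ (a + k)) ((1 - X ^ (d * p ^ a)) ^ p ^ k) := by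
  obtain ⟨k', rfl⟩ : ∃ k', k = k' + 1 := ⟨k - 1, by omega⟩
  have := iterate hp (base hp d a) k'
  rwa [← pow_mul, ← pow_add] at this

end
end EtaPodAux

namespace EtaPodAux
open PowerSeries Finset
open scoped Classical
noncomputable section

/-! ### Finite products over ℚ and truncated equality -/

def Pd (n d : ℕ) : PowerSeries ℚ := ∏ m ∈ Finset.range (n + 1), (1 - X ^ (d * (m + 1)))

def Qp (n : ℕ) (P : ℕ → Prop) : PowerSeries ℚ :=
  ∏ i ∈ (Finset.range (n + 1)).filter (fun i => 0 < i ∧ P i), (1 - X ^ i)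

def sO (ℓ n : ℕ) : Finset ℕ :=
  (Finset.range (n + 1)).filter (fun i => 0 < i ∧ (¬ ℓ ∣ i ∧ Odd i))

def sE (ℓ n : ℕ) : Finset ℕ :=
  (Finset.range (n + 1)).filter (fun i => 0 < i ∧ (¬ ℓ ∣ i ∧ ¬ Odd i))

def sπ (ℓ n : ℕ) : Finset ℕ :=
  (Finset.range (n + 1)).filter (fun i => 0 < i ∧ ¬ ℓ ∣ i)

theorem prod_tail_eqN {n : ℕ} {ι : Type*} (t : Finset ι) (e : ι → ℕ)
    (he : ∀ i ∈ t, n < e i) : EqN n (∏ i ∈ t, (1 - X ^ (e i) : PowerSeries ℚ)) 1 := by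
  have h := EqN.prod (n := n) t (fun i => (1 - X ^ (e i) : PowerSeries ℚ)) (fun _ => 1)
    (fun i hi => eqN_one_sub_X_pow (he i hi))
  rwa [Finset.prod_const_one] at h

theorem Pd_eqN (n d : ℕ) (hd : 0 < d) : EqN n (Pd n d) (Qp n (fun i => d ∣ i)) := by
  rw [Pd, ← Finset.prod_filter_mul_prod_filter_not (Finset.range (n + 1))
    (fun m => d * (m + 1) ≤ n)]
  have h1 : ∏ m ∈ (Finset.range (n + 1)).filter (fun m => d * (m + 1) ≤ n),
      (1 - (X : PowerSeries ℚ) ^ (d * (m + 1))) = Qp n (fun i => d ∣ i) := by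
    refine Finset.prod_nbij' (fun m => d * (m + 1)) (fun i => i / d - 1) ?_ ?_ ?_ ?_ ?_
    · intro m hm
      simp only [Finset.mem_filter, Finset.mem_range] at hm ⊢
      exact ⟨by omega, by positivity, Dvd.intro _ rfl⟩
    · intro i hi
      simp only [Finset.mem_filter, Finset.mem_range] at hi ⊢
      obtain ⟨hin, hipos, t, rfl⟩ := hi
      have ht : 0 < t := by by_contra h; simp only [Nat.not_lt, Nat.le_zero] at h; subst h; simp at hipos
      have hdiv : d * t / d = t := Nat.mul_div_cancel_left t hd
      have htle : t ≤ d * t := Nat.le_mul_of_pos_left t hd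
      rw [hdiv]
      constructor
      · omega
      · rw [Nat.sub_add_cancel ht]; omega
    · intro m hm
      simp only [Nat.mul_div_cancel_left _ hd, Nat.add_sub_cancel]
    · intro i hi
      simp only [Finset.mem_filter, Finset.mem_range] at hi
      obtain ⟨hin, hipos, t, rfl⟩ := hi
      have ht : 0 < t := by by_contra h; simp only [Nat.not_lt, Nat.le_zero] at h; subst h; simp at hipos
      show d * (d * t / d - 1 + 1) = d * t
      rw [Nat.mul_div_cancel_left t hd, Nat.sub_add_cancel ht]
    · intro m hm; rfl
  have h2 : EqN n (∏ m ∈ (Finset.range (n + 1)).filter (fun m => ¬ d * (m + 1) ≤ n),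
      (1 - (X : PowerSeries ℚ) ^ (d * (m + 1)))) 1 := by
    refine prod_tail_eqN _ _ ?_
    intro m hm
    simp only [Finset.mem_filter] at hm
    omega
  exact (EqN.mul (EqN.of_eq h1) h2).trans (EqN.of_eq (mul_one _))

theorem double_eqN {ℓ : ℕ} (hℓodd : Odd ℓ) (n : ℕ) :
    EqN n (∏ i ∈ sO ℓ n, (1 - X ^ (2 * i) : PowerSeries ℚ))
      (Qp n (fun j => j % 4 = 2 ∧ ¬ ℓ ∣ j)) := by
  have hdvd2 : ∀ i, ℓ ∣ 2 * i ↔ ℓ ∣ i := fun i => (hℓodd.coprime_two_right).dvd_mul_left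
  rw [← Finset.prod_filter_mul_prod_filter_not (sO ℓ n) (fun i => 2 * i ≤ n)]
  have h1 : ∏ i ∈ (sO ℓ n).filter (fun i => 2 * i ≤ n), (1 - (X : PowerSeries ℚ) ^ (2 * i))
      = Qp n (fun j => j % 4 = 2 ∧ ¬ ℓ ∣ j) := by
    refine Finset.prod_nbij' (fun i => 2 * i) (fun j => j / 2) ?_ ?_ ?_ ?_ ?_
    · intro i hi
      simp only [sO, Finset.mem_filter, Finset.mem_range, Nat.odd_iff] at hi ⊢
      refine ⟨by omega, by omega, by omega, fun h => hi.1.2.2.1 ((hdvd2 i).mp h)⟩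
    · intro j hj
      simp only [Qp, sO, Finset.mem_filter, Finset.mem_range, Nat.odd_iff] at hj ⊢
      obtain ⟨hjn, hjpos, hj4, hjl⟩ := hj
      refine ⟨⟨by omega, by omega, ⟨fun h => hjl ?_, by omega⟩⟩, by omega⟩
      have : j = 2 * (j / 2) := by omega
      rw [this]
      exact h.mul_left 2
    · intro i _
      show 2 * i / 2 = i
      omega
    · intro j hj
      simp only [Qp, Finset.mem_filter, Finset.mem_range] at hj
      show 2 * (j / 2) = j
      omega
    · intro i _; rfl
  have h2 : EqN n (∏ i ∈ (sO ℓ n).filter (fun i => ¬ 2 * i ≤ n),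
      (1 - (X : PowerSeries ℚ) ^ (2 * i))) 1 := by
    refine prod_tail_eqN _ _ ?_
    intro i hi
    simp only [Finset.mem_filter] at hi
    omega
  exact (EqN.mul (EqN.of_eq h1) h2).trans (EqN.of_eq (mul_one _))

theorem Qexact {ℓ : ℕ} (hℓodd : Odd ℓ) (n : ℕ) :
    Qp n (fun i => 2 ∣ i) * Qp n (fun i => ℓ ∣ i) * Qp n (fun i => 4 * ℓ ∣ i)
        * Qp n (fun i => ¬ ℓ ∣ i ∧ Odd i) * Qp n (fun i => ¬ ℓ ∣ i ∧ ¬ Odd i)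
      = Qp n (fun j => j % 4 = 2 ∧ ¬ ℓ ∣ j) * Qp n (fun i => 4 ∣ i) * Qp n (fun i => 2 * ℓ ∣ i)
        * Qp n (fun i => 1 ∣ i) := by
  have hcop2 : Nat.Coprime 2 ℓ := Nat.coprime_two_left.mpr hℓodd
  have hcop4 : Nat.Coprime 4 ℓ := by
    have := hcop2.mul hcop2
    norm_num at this ⊢
    exact this
  have h4l : ∀ i, 4 * ℓ ∣ i ↔ 4 ∣ i ∧ ℓ ∣ i := by
    intro i
    constructor
    · intro h
      exact ⟨dvd_trans (Dvd.intro ℓ rfl) h, dvd_trans (Dvd.intro_left 4 rfl) h⟩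
    · rintro ⟨h4, hl⟩
      exact hcop4.mul_dvd_of_dvd_of_dvd h4 hl
  have h2l : ∀ i, 2 * ℓ ∣ i ↔ 2 ∣ i ∧ ℓ ∣ i := by
    intro i
    constructor
    · intro h
      exact ⟨dvd_trans (Dvd.intro ℓ rfl) h, dvd_trans (Dvd.intro_left 2 rfl) h⟩
    · rintro ⟨h4, hl⟩
      exact hcop2.mul_dvd_of_dvd_of_dvd h4 hl
  have hodd : ∀ i : ℕ, Odd i ↔ ¬ 2 ∣ i := by intro i; rw [Nat.odd_iff]; omega
  simp only [Qp, Finset.prod_filter, ← Finset.prod_mul_distrib]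
  refine Finset.prod_congr rfl ?_
  intro i _
  rcases Nat.eq_zero_or_pos i with rfl | hipos
  · norm_num
  · have hmod : i % 4 = 2 ↔ 2 ∣ i ∧ ¬ 4 ∣ i := by omega
    by_cases h2 : 2 ∣ i <;> by_cases h4 : 4 ∣ i <;> by_cases hl : ℓ ∣ i <;>
      simp only [hipos, h2, h4, hl, h4l i, h2l i, hmod, hodd i, one_dvd, true_and, and_true,
        not_true, not_false_iff, false_and, and_false, if_true, if_false, if_neg, if_pos,
        not_not, true_iff, iff_true] <;>
      first
        | (exfalso; omega)
        | ring1
        | norm_num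

end
end EtaPodAux
namespace EtaPodAux
open PowerSeries Finset
open scoped Classical
noncomputable section

theorem sπ_filter_odd (ℓ n : ℕ) : (sπ ℓ n).filter (fun i => Odd i) = sO ℓ n := by
  ext i
  simp only [sπ, sO, Finset.mem_filter, Finset.mem_range]
  tauto

theorem sπ_filter_not_odd (ℓ n : ℕ) : (sπ ℓ n).filter (fun i => ¬ Odd i) = sE ℓ n := by
  ext i
  simp only [sπ, sE, Finset.mem_filter, Finset.mem_range]
  tauto

theorem podGF {ℓ : ℕ} (n : ℕ) :
    EqN n (PowerSeries.mk fun m => ((pod ℓ m : ℕ) : ℚ))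
      ((∏ i ∈ sO ℓ n, (1 + X ^ i)) * ∏ i ∈ sE ℓ n, (1 - X ^ i)⁻¹) := by
  intro m hm
  rw [coeff_mk]
  set c : ℕ → Set ℕ := fun i => if Odd i then ({0, 1} : Set ℕ) else Set.univ with hc
  have hcard : pod ℓ m =
      #{p : m.Partition | (∀ j, p.parts.count j ∈ c j) ∧ ∀ j ∈ p.parts, j ∈ sπ ℓ n} := by
    rw [pod, Nat.card_eq_fintype_card, Fintype.card_subtype]
    congr 1
    apply Finset.filter_congr
    intro P _
    constructor
    · rintro ⟨h1, h2⟩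
      constructor
      · intro j
        by_cases hj : Odd j
        · have := h2 j hj
          simp only [hc, if_pos hj, Set.mem_insert_iff, Set.mem_singleton_iff]
          omega
        · simp only [hc, if_neg hj]
          exact Set.mem_univ _
      · intro j hj
        have hjm : j ≤ m := by
          have := Multiset.single_le_sum (fun a _ => Nat.zero_le a) j hj
          rwa [P.parts_sum] at this
        simp only [sπ, Finset.mem_filter, Finset.mem_range]
        exact ⟨by omega, P.parts_pos hj, h1 j hj⟩
    · rintro ⟨h1, h2⟩
      constructor
      · intro i hi
        have := h2 i hi
        simp only [sπ, Finset.mem_filter, Finset.mem_range] at this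
        exact this.2.2
      · intro i hi
        have := h1 i
        rw [hc] at this
        simp only [if_pos hi, Set.mem_insert_iff, Set.mem_singleton_iff] at this
        omega
  have hGF := partialGF_prop ℚ m (sπ ℓ n)
    (by intro i hi; simp only [sπ, Finset.mem_filter] at hi; exact hi.2.1)
    c
    (by
      intro i _
      by_cases hi : Odd i
      · simp only [hc, if_pos hi]
        exact Set.mem_insert 0 _
      · simp only [hc, if_neg hi]
        exact Set.mem_univ _)
  have hprod : ∏ i ∈ sπ ℓ n, indicatorSeries ℚ ((· * i) '' c i)
      = (∏ i ∈ sO ℓ n, (1 + X ^ i)) * ∏ i ∈ sE ℓ n, (1 - X ^ i)⁻¹ := by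
    rw [← Finset.prod_filter_mul_prod_filter_not (sπ ℓ n) (fun i => Odd i),
      sπ_filter_odd, sπ_filter_not_odd]
    congr 1
    · refine Finset.prod_congr rfl ?_
      intro i hi
      simp only [sO, Finset.mem_filter, Finset.mem_range] at hi
      obtain ⟨-, hipos, -, hiodd⟩ := hi
      simp only [hc, if_pos hiodd]
      have himg : ((· * i) '' ({0, 1} : Set ℕ)) = ({0, i} : Set ℕ) := by
        rw [Set.image_pair]
        simp
      rw [himg]
      have h2s := two_series (α := ℚ) (i - 1)
      rw [Nat.succ_eq_add_one, Nat.sub_add_cancel hipos] at h2s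
      exact h2s.symm
    · refine Finset.prod_congr rfl ?_
      intro i hi
      simp only [sE, Finset.mem_filter, Finset.mem_range] at hi
      obtain ⟨-, hipos, -, hiodd⟩ := hi
      simp only [hc, if_neg hiodd]
      have himg : ((· * i) '' (Set.univ : Set ℕ)) = {k | i ∣ k} := by
        ext k
        simp only [Set.mem_image, Set.mem_univ, true_and, Set.mem_setOf_eq]
        constructor
        · rintro ⟨a, rfl⟩
          exact Dvd.intro_left a rfl
        · rintro ⟨w, rfl⟩
          exact ⟨w, mul_comm w i⟩
      rw [himg]
      have hns := num_series' (α := ℚ) (i - 1)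
      rw [Nat.sub_add_cancel hipos] at hns
      exact hns.symm
  rw [hcard, hGF, hprod]

end
end EtaPodAux
namespace EtaPodAux
open PowerSeries Finset
open scoped Classical
noncomputable section

theorem constCoeff_one_sub_X_pow {i : ℕ} (hi : 0 < i) :
    constantCoeff (R := ℚ) (1 - X ^ i) = 1 := by
  rw [map_sub, map_one, map_pow, constantCoeff_X, zero_pow (by omega), sub_zero]

theorem unit_cancel {i : ℕ} (hi : 0 < i) :
    (1 - X ^ i : PowerSeries ℚ) * (1 - X ^ i)⁻¹ = 1 :=
  PowerSeries.mul_inv_cancel _ (by rw [constCoeff_one_sub_X_pow hi]; exact one_ne_zero)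

theorem unit_cancel' {i : ℕ} (hi : 0 < i) :
    ((1 - X ^ i)⁻¹ : PowerSeries ℚ) * (1 - X ^ i) = 1 :=
  PowerSeries.inv_mul_cancel _ (by rw [constCoeff_one_sub_X_pow hi]; exact one_ne_zero)

theorem coreB {ℓ : ℕ} (hℓodd : Odd ℓ) (n : ℕ) :
    EqN n (Pd n 2 * Pd n ℓ * Pd n (4 * ℓ))
      ((PowerSeries.mk fun m => ((pod ℓ m : ℕ) : ℚ)) * (Pd n 4 * Pd n (2 * ℓ) * Pd n 1)) := by
  have hℓpos : 0 < ℓ := by rcases hℓodd with ⟨k, rfl⟩; omega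
  have hOmem : ∀ i ∈ sO ℓ n, 0 < i := by
    intro i hi; simp only [sO, Finset.mem_filter] at hi; exact hi.2.1
  have hEmem : ∀ i ∈ sE ℓ n, 0 < i := by
    intro i hi; simp only [sE, Finset.mem_filter] at hi; exact hi.2.1
  set W : PowerSeries ℚ := (∏ i ∈ sO ℓ n, (1 - X ^ i)) * ∏ i ∈ sE ℓ n, (1 - X ^ i) with hW
  set Winv : PowerSeries ℚ :=
    (∏ i ∈ sO ℓ n, (1 - X ^ i)⁻¹) * ∏ i ∈ sE ℓ n, (1 - X ^ i)⁻¹ with hWinv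
  have hWW : W * Winv = 1 := by
    rw [hW, hWinv, show ((∏ i ∈ sO ℓ n, (1 - X ^ i : PowerSeries ℚ)) *
          ∏ i ∈ sE ℓ n, (1 - X ^ i)) *
        ((∏ i ∈ sO ℓ n, (1 - X ^ i)⁻¹) * ∏ i ∈ sE ℓ n, (1 - X ^ i)⁻¹)
        = ((∏ i ∈ sO ℓ n, ((1 - X ^ i) * (1 - X ^ i)⁻¹))) *
          ((∏ i ∈ sE ℓ n, ((1 - X ^ i) * (1 - X ^ i)⁻¹))) from by
          rw [Finset.prod_mul_distrib, Finset.prod_mul_distrib]; ring]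
    rw [Finset.prod_congr rfl (fun i hi => unit_cancel (hOmem i hi)),
        Finset.prod_congr rfl (fun i hi => unit_cancel (hEmem i hi)),
        Finset.prod_const_one, Finset.prod_const_one, mul_one]
  have hsOQ : (∏ i ∈ sO ℓ n, (1 - X ^ i : PowerSeries ℚ))
      = Qp n (fun i => ¬ ℓ ∣ i ∧ Odd i) := by simp only [Qp, sO]
  have hsEQ : (∏ i ∈ sE ℓ n, (1 - X ^ i : PowerSeries ℚ))
      = Qp n (fun i => ¬ ℓ ∣ i ∧ ¬ Odd i) := by simp only [Qp, sE]
  have hL : EqN n (Pd n 2 * Pd n ℓ * Pd n (4 * ℓ) * W)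
      (Qp n (fun i => 2 ∣ i) * Qp n (fun i => ℓ ∣ i) * Qp n (fun i => 4 * ℓ ∣ i)
        * Qp n (fun i => ¬ ℓ ∣ i ∧ Odd i) * Qp n (fun i => ¬ ℓ ∣ i ∧ ¬ Odd i)) := by
    refine EqN.trans (EqN.of_eq (show Pd n 2 * Pd n ℓ * Pd n (4 * ℓ) * W
      = Pd n 2 * Pd n ℓ * Pd n (4 * ℓ) * Qp n (fun i => ¬ ℓ ∣ i ∧ Odd i)
        * Qp n (fun i => ¬ ℓ ∣ i ∧ ¬ Odd i) from by rw [hW, hsOQ, hsEQ]; ring)) ?_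
    exact ((((Pd_eqN n 2 (by norm_num)).mul (Pd_eqN n ℓ hℓpos)).mul
      (Pd_eqN n (4 * ℓ) (by positivity))).mul (EqN.refl _)).mul (EqN.refl _)
  have hR : EqN n ((PowerSeries.mk fun m => ((pod ℓ m : ℕ) : ℚ))
        * (Pd n 4 * Pd n (2 * ℓ) * Pd n 1) * W)
      (Qp n (fun j => j % 4 = 2 ∧ ¬ ℓ ∣ j) * Qp n (fun i => 4 ∣ i) * Qp n (fun i => 2 * ℓ ∣ i)
        * Qp n (fun i => 1 ∣ i)) := by
    have step1 : EqN n ((PowerSeries.mk fun m => ((pod ℓ m : ℕ) : ℚ))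
          * (Pd n 4 * Pd n (2 * ℓ) * Pd n 1) * W)
        (((∏ i ∈ sO ℓ n, (1 + X ^ i)) * ∏ i ∈ sE ℓ n, (1 - X ^ i)⁻¹)
          * (Pd n 4 * Pd n (2 * ℓ) * Pd n 1) * W) :=
      (EqN.mul (podGF n) (EqN.refl _)).mul (EqN.refl _)
    have step2 : ((∏ i ∈ sO ℓ n, (1 + X ^ i : PowerSeries ℚ)) * ∏ i ∈ sE ℓ n, (1 - X ^ i)⁻¹)
          * (Pd n 4 * Pd n (2 * ℓ) * Pd n 1) * W
        = (∏ i ∈ sO ℓ n, ((1 + X ^ i) * (1 - X ^ i)))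
          * (∏ i ∈ sE ℓ n, ((1 - X ^ i)⁻¹ * (1 - X ^ i)))
          * (Pd n 4 * Pd n (2 * ℓ) * Pd n 1) := by
      rw [hW, Finset.prod_mul_distrib, Finset.prod_mul_distrib]
      ring
    have step3 : (∏ i ∈ sO ℓ n, ((1 + X ^ i : PowerSeries ℚ) * (1 - X ^ i)))
        = ∏ i ∈ sO ℓ n, (1 - X ^ (2 * i)) := by
      refine Finset.prod_congr rfl ?_
      intro i _
      rw [two_mul, pow_add]
      ring
    have step4 : (∏ i ∈ sE ℓ n, ((1 - X ^ i : PowerSeries ℚ)⁻¹ * (1 - X ^ i))) = 1 := by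
      rw [Finset.prod_congr rfl (fun i hi => unit_cancel' (hEmem i hi)),
        Finset.prod_const_one]
    refine step1.trans ?_
    refine EqN.trans (EqN.of_eq (by rw [step2, step3, step4, mul_one])) ?_
    -- now : ∏sO (1 - X^(2i)) * (Pd 4 * Pd 2ℓ * Pd 1) ≈ Qp S₁ * Qp 4 * Qp 2ℓ * Qp 1
    refine EqN.trans (EqN.mul (double_eqN hℓodd n)
      (((Pd_eqN n 4 (by norm_num)).mul (Pd_eqN n (2 * ℓ) (by positivity))).mul
        (Pd_eqN n 1 (by norm_num)))) ?_
    exact EqN.of_eq (by ring)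
  have hLR : EqN n (Pd n 2 * Pd n ℓ * Pd n (4 * ℓ) * W)
      ((PowerSeries.mk fun m => ((pod ℓ m : ℕ) : ℚ)) * (Pd n 4 * Pd n (2 * ℓ) * Pd n 1) * W) :=
    (hL.trans (EqN.of_eq (Qexact hℓodd n))).trans hR.symm
  have hfin := hLR.mul (EqN.refl Winv)
  rw [mul_assoc _ W Winv, mul_assoc _ W Winv, hWW, mul_one, mul_one] at hfin
  exact hfin

end
end EtaPodAux
namespace EtaPodAux
open PowerSeries Finset
open scoped Classical
noncomputable section

/-- the coefficientwise embedding `ℤ⟦X⟧ → ℚ⟦X⟧`. -/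
def mq : PowerSeries ℤ →+* PowerSeries ℚ := PowerSeries.map (Int.castRingHom ℚ)

theorem coeff_mq (f : PowerSeries ℤ) (j : ℕ) :
    coeff j (mq f) = ((coeff j f : ℤ) : ℚ) := coeff_map _ _ _

theorem eqN_of_mq {n : ℕ} {f g : PowerSeries ℤ} (h : EqN n (mq f) (mq g)) :
    EqN n f g := by
  intro j hj
  have := h j hj
  rw [coeff_mq, coeff_mq] at this
  exact_mod_cast this

theorem mq_etaT (δ n : ℕ) : mq (etaT δ (n + 1)) = X ^ (δ / 24) * Pd n δ := by
  rw [etaT, Pd, map_mul, map_pow, mq, PowerSeries.map_X, map_prod]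
  congr 1
  refine Finset.prod_congr rfl ?_
  intro m _
  rw [map_sub, map_one, map_pow, PowerSeries.map_X]

theorem sub24_Pd (n d : ℕ) : sub24 (Pd n d) = Pd n (24 * d) := by
  rw [Pd, Pd, sub24_prod]
  refine Finset.prod_congr rfl ?_
  intro m _
  rw [sub24_one_sub_X_pow, mul_assoc]

theorem mq_podF (ℓ : ℕ) :
    mq (PowerSeries.mk (fun m => if 24 ∣ m then (pod ℓ (m / 24) : ℤ) else 0))
      = sub24 (PowerSeries.mk fun m => ((pod ℓ m : ℕ) : ℚ)) := by
  ext j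
  rw [coeff_mq, coeff_mk, coeff_sub24, coeff_mk]
  split_ifs with h
  · push_cast
    rfl
  · exact Int.cast_zero

/-- Step B over `ℤ`: the exact (truncated) eta-quotient identity. -/
theorem stepB {ℓ : ℕ} (hℓodd : Odd ℓ) (hℓ : 1 < ℓ) (n : ℕ) :
    EqN n (etaT 48 (n + 1) * etaT (24 * ℓ) (n + 1) * etaT (96 * ℓ) (n + 1))
      ((X ^ (3 * (ℓ - 1)) * PowerSeries.mk (fun m => if 24 ∣ m then (pod ℓ (m / 24) : ℤ) else 0))
        * (etaT 96 (n + 1) * etaT (48 * ℓ) (n + 1) * etaT 24 (n + 1))) := by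
  apply eqN_of_mq
  have mq_X : mq X = X := by rw [mq, PowerSeries.map_X]
  simp only [map_mul, map_pow, mq_etaT, mq_podF, mq_X]
  have e1 : (48 : ℕ) / 24 = 2 := by norm_num
  have e2 : 24 * ℓ / 24 = ℓ := Nat.mul_div_cancel_left ℓ (by norm_num)
  have e3 : 96 * ℓ / 24 = 4 * ℓ := by
    rw [show 96 * ℓ = 24 * (4 * ℓ) by ring, Nat.mul_div_cancel_left _ (by norm_num)]
  have e4 : (96 : ℕ) / 24 = 4 := by norm_num
  have e5 : 48 * ℓ / 24 = 2 * ℓ := by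
    rw [show 48 * ℓ = 24 * (2 * ℓ) by ring, Nat.mul_div_cancel_left _ (by norm_num)]
  have e6 : (24 : ℕ) / 24 = 1 := by norm_num
  rw [e1, e2, e3, e4, e5, e6]
  -- reduce to the core combinatorial identity, multiplied by `X ^ (2 + ℓ + 4ℓ)`
  have hcore := coreB hℓodd n
  have hsub := sub24_eqN hcore
  rw [sub24_mul, sub24_mul, sub24_mul, sub24_mul, sub24_mul, sub24_Pd, sub24_Pd, sub24_Pd,
    sub24_Pd, sub24_Pd, sub24_Pd] at hsub
  have hexp : 3 * (ℓ - 1) + (4 + (2 * ℓ + 1)) = 2 + (ℓ + 4 * ℓ) := by omega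
  have hmul := (EqN.refl (n := n) ((X : PowerSeries ℚ) ^ (2 + (ℓ + 4 * ℓ)))).mul hsub
  refine EqN.trans (EqN.of_eq ?_) (EqN.trans hmul (EqN.of_eq ?_))
  · rw [show 24 * 2 = 48 by norm_num, show 24 * (4 * ℓ) = 96 * ℓ by ring]
    ring
  · rw [show 24 * 4 = 96 by norm_num, show 24 * (2 * ℓ) = 48 * ℓ by ring,
      show 24 * 1 = 24 by norm_num, ← hexp]
    ring

/-- Step A over `ℤ`: the modular congruence for the eta powers. -/
theorem stepA {p : ℕ} (hp : p.Prime) (a k n : ℕ) (hk : 1 ≤ k) :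
    DC p k (etaT 24 (n + 1) ^ p ^ (a + k)) (etaT (24 * p ^ a) (n + 1) ^ p ^ k) := by
  rw [etaT, etaT, Nat.mul_div_cancel_left _ (by norm_num : 0 < 24),
    show (24 : ℕ) / 24 = 1 by norm_num, mul_pow, mul_pow, ← pow_mul, ← pow_mul,
    ← Finset.prod_pow, ← Finset.prod_pow]
  have hX : (X : PowerSeries ℤ) ^ (1 * p ^ (a + k)) = X ^ (p ^ a * p ^ k) := by
    rw [one_mul, ← pow_add]
  rw [hX]
  refine (DC.refl p k _).mul (DC.prod _ _ _ ?_)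
  intro m _
  have h := main_pow_congr hp (24 * (m + 1)) a k hk
  rwa [show 24 * (m + 1) * p ^ a = 24 * p ^ a * (m + 1) by ring] at h

theorem DC.coeff_dvd {p k : ℕ} {f g : PowerSeries ℤ} (h : DC p k f g) (m : ℕ) :
    ((p : ℤ) ^ k) ∣ coeff m f - coeff m g := by
  obtain ⟨h₀, hh⟩ := h
  have := congrArg (coeff m) hh
  rw [map_sub, coeff_C_mul] at this
  exact ⟨coeff m h₀, this⟩

end
end EtaPodAux

/-- Lemma 3.1, coefficientwise mod `p^k`, with the eta quotient in cross-multiplied form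
(the denominator eta factors are units in `ℤ[[q]]`, so this is equivalent). -/
theorem eta_quotient_pod_congr (ℓ p a k : ℕ) (hℓodd : Odd ℓ) (hℓ : 1 < ℓ) (hp : p.Prime)
    (hpa : p ^ a ∣ ℓ) (hpa' : ¬ p ^ (a + 1) ∣ ℓ) (ha : 0 < a) (hk : 0 < k) (n : ℕ) :
    PowerSeries.coeff n
        (etaT 24 (n + 1) ^ (p ^ (a + k) - 1) * etaT 48 (n + 1) * etaT (24 * ℓ) (n + 1) *
          etaT (96 * ℓ) (n + 1)) ≡
      PowerSeries.coeff n
        ((PowerSeries.X ^ (3 * (ℓ - 1)) *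
            PowerSeries.mk (fun m => if 24 ∣ m then (pod ℓ (m / 24) : ℤ) else 0)) *
          (etaT 96 (n + 1) * etaT (48 * ℓ) (n + 1) * etaT (24 * p ^ a) (n + 1) ^ p ^ k))
      [ZMOD (p : ℤ) ^ k] := by
  classical
  open EtaPodAux PowerSeries in
  set A := etaT 24 (n + 1) with hA
  set B := etaT 48 (n + 1)
  set Aℓ := etaT (24 * ℓ) (n + 1)
  set Cℓ := etaT (96 * ℓ) (n + 1)
  set C := etaT 96 (n + 1)
  set Bℓ := etaT (48 * ℓ) (n + 1)
  set Pa := etaT (24 * p ^ a) (n + 1)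
  set F : PowerSeries ℤ := PowerSeries.mk (fun m => if 24 ∣ m then (pod ℓ (m / 24) : ℤ) else 0)
    with hF
  set Y : PowerSeries ℤ := X ^ (3 * (ℓ - 1)) * F with hY
  have hP : p ^ (a + k) - 1 + 1 = p ^ (a + k) := Nat.succ_pred_eq_of_pos (pow_pos hp.pos _)
  -- step B
  have hB : EqN n (B * Aℓ * Cℓ) (Y * (C * Bℓ * A)) := stepB hℓodd hℓ n
  have h1 : EqN n (A ^ (p ^ (a + k) - 1) * B * Aℓ * Cℓ)
      (A ^ (p ^ (a + k) - 1) * (Y * (C * Bℓ * A))) :=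
    (EqN.of_eq (by ring)).trans ((EqN.refl _).mul hB)
  have h2 : A ^ (p ^ (a + k) - 1) * (Y * (C * Bℓ * A)) = Y * (C * Bℓ) * A ^ p ^ (a + k) := by
    have hgen : ∀ (u y c b : PowerSeries ℤ) (m : ℕ), u ^ m * (y * (c * b * u))
        = y * (c * b) * u ^ (m + 1) := by intros; ring
    have h2' := hgen A Y C Bℓ (p ^ (a + k) - 1)
    rwa [hP] at h2'
  -- step A
  have hAc : DC p k (Y * (C * Bℓ) * A ^ p ^ (a + k)) (Y * (C * Bℓ) * Pa ^ p ^ k) :=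
    (DC.refl p k _).mul (stepA hp a k n hk)
  have h3 : Y * (C * Bℓ) * Pa ^ p ^ k = Y * (C * Bℓ * Pa ^ p ^ k) := by ring
  -- combine at coefficient `n`
  rw [Int.modEq_iff_dvd]
  have hc1 : coeff n (A ^ (p ^ (a + k) - 1) * B * Aℓ * Cℓ)
      = coeff n (Y * (C * Bℓ) * A ^ p ^ (a + k)) := by
    rw [← h2]
    exact h1 n le_rfl
  have hc2 := hAc.coeff_dvd n
  rw [hc1, ← h3]
  exact (dvd_sub_comm).mp hc2
end
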